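/- arXiv:2501.04701 — 7 statements merged into one kernel-verified Lean document; each statement's English description precedes it below -/
import Mathlib

section
/- Two-dimensional Gronwall inequality: Let y, k : [0,S] × [0,T] → ℝ be nonnegative continuous functions and C ≥ 0 a constant. If y(s,t) ≤ C + ∫₀ˢ ∫₀ᵗ k(σ,τ) y(σ,τ) dτ dσ for all (s,t) ∈ [0,S] × [0,T], then y(s,t) ≤ C · exp(∫₀ˢ ∫₀ᵗ k(σ,τ) dτ dσ) for all (s,t) ∈ [0,S] × [0,T]. -/
/-!
Fix `t` and put `u σ = ∫₀ᵗ k(σ,τ) y(σ,τ) dτ`, `K σ = ∫₀ᵗ k(σ,τ) dτ` and `φ σ = C + ∫₀^σ u`.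
Since `k y ≥ 0`, the double integral in the hypothesis grows with its inner upper limit, so
`y(σ,τ) ≤ φ σ` for `τ ≤ t`, whence `u ≤ K φ`. This is the hypothesis of the one-dimensional
Gronwall inequality, which gives `y(s,t) ≤ φ s ≤ C exp (∫₀ˢ K)`.

Continuity is only assumed on the rectangle; clamping both coordinates into it extends `y` and `k`
to continuous functions on the plane without changing any of the integrals involved.
-/

open Set Real intervalIntegral

theorem ContinuousOn.exists_continuous_eqOn_Icc_prod {α β E : Type*}
    [LinearOrder α] [TopologicalSpace α] [OrderTopology α]
    [LinearOrder β] [TopologicalSpace β] [OrderTopology β] [TopologicalSpace E]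
    {a b : α} {c d : β} {f : α × β → E} (hab : a ≤ b) (hcd : c ≤ d)
    (hf : ContinuousOn f (Icc a b ×ˢ Icc c d)) :
    ∃ g : α × β → E, Continuous g ∧ EqOn g f (Icc a b ×ˢ Icc c d) := by
  refine ⟨fun p => f (projIcc a b hab p.1, projIcc c d hcd p.2), ?_, ?_⟩
  · exact hf.comp_continuous (by fun_prop)
      fun p => ⟨(projIcc a b hab p.1).2, (projIcc c d hcd p.2).2⟩
  · rintro ⟨x, z⟩ ⟨hx, hz⟩
    simp only [projIcc_of_mem hab hx, projIcc_of_mem hcd hz]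

theorem intervalIntegral.integral_integral_congr_Icc {E : Type*} [NormedAddCommGroup E]
    [NormedSpace ℝ E] {f g : ℝ × ℝ → E} {a b c d s t : ℝ} (h : EqOn f g (Icc a b ×ˢ Icc c d))
    (hs : s ∈ Icc a b) (ht : t ∈ Icc c d) :
    ∫ x in a..s, ∫ z in c..t, f (x, z) = ∫ x in a..s, ∫ z in c..t, g (x, z) :=
  integral_congr fun _ hx => integral_congr fun _ hz =>
    h ⟨uIcc_subset_Icc (left_mem_Icc.2 (hs.1.trans hs.2)) hs hx,
      uIcc_subset_Icc (left_mem_Icc.2 (ht.1.trans ht.2)) ht hz⟩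

theorem intervalIntegral.integral_integral_mono_inner_upper {f : ℝ × ℝ → ℝ} {a b c t t' : ℝ}
    (hf : Continuous f) (hab : a ≤ b) (hct : c ≤ t) (htt' : t ≤ t')
    (hf0 : ∀ x ∈ Icc a b, ∀ z ∈ Icc c t', 0 ≤ f (x, z)) :
    ∫ x in a..b, ∫ z in c..t, f (x, z) ≤ ∫ x in a..b, ∫ z in c..t', f (x, z) := by
  have hint : ∀ u, IntervalIntegrable (fun x => ∫ z in c..u, f (x, z)) MeasureTheory.volume a b :=
    fun u => (continuous_parametric_intervalIntegral_of_continuous'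
      (f := fun x z => f (x, z)) (by fun_prop) c u).intervalIntegrable a b
  refine integral_mono_on hab (hint t) (hint t') fun x hx => ?_
  refine integral_mono_interval le_rfl hct htt' ?_ ((hf.comp (by fun_prop)).intervalIntegrable c t')
  exact MeasureTheory.ae_restrict_of_forall_mem measurableSet_Ioc
    fun z hz => hf0 x hx z (Ioc_subset_Icc_self hz)

theorem add_integral_le_mul_exp_integral {u K : ℝ → ℝ} {a b C : ℝ}
    (hu : Continuous u) (hK : Continuous K) (hab : a ≤ b)
    (h : ∀ x ∈ Icc a b, u x ≤ K x * (C + ∫ z in a..x, u z)) :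
    C + ∫ x in a..b, u x ≤ C * exp (∫ x in a..b, K x) := by
  set φ : ℝ → ℝ := fun x => C + ∫ z in a..x, u z
  set I : ℝ → ℝ := fun x => ∫ z in a..x, K z
  have hg : ∀ x, HasDerivAt (fun x => φ x * exp (-I x)) ((u x - K x * φ x) * exp (-I x)) x := by
    intro x
    have hφ : HasDerivAt φ (u x) x := (hu.integral_hasStrictDerivAt a x).hasDerivAt.const_add C
    have hI : HasDerivAt I (K x) x := (hK.integral_hasStrictDerivAt a x).hasDerivAt
    have hE : HasDerivAt (fun x => exp (-I x)) (exp (-I x) * -K x) x := hI.neg.exp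
    exact (hφ.mul hE).congr_deriv (by ring)
  have hanti : AntitoneOn (fun x => φ x * exp (-I x)) (Icc a b) :=
    antitoneOn_of_hasDerivWithinAt_nonpos (convex_Icc a b)
      (fun x _ => (hg x).continuousAt.continuousWithinAt) (fun x _ => (hg x).hasDerivWithinAt)
      fun x hx => mul_nonpos_of_nonpos_of_nonneg (sub_nonpos.2 (h x (interior_subset hx)))
        (exp_pos _).le
  have hb : φ b * exp (-I b) ≤ C := by
    simpa [φ, I] using hanti (left_mem_Icc.2 hab) (right_mem_Icc.2 hab) hab
  calc φ b = φ b * exp (-I b) * exp (I b) := by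
        rw [mul_assoc, ← exp_add, neg_add_cancel, exp_zero, mul_one]
    _ ≤ C * exp (I b) := mul_le_mul_of_nonneg_right hb (exp_pos _).le

theorem gronwall_2d_of_continuous {S T C : ℝ} {y k : ℝ × ℝ → ℝ}
    (hy : Continuous y) (hk : Continuous k)
    (hy0 : ∀ s ∈ Icc 0 S, ∀ t ∈ Icc 0 T, 0 ≤ y (s, t))
    (hk0 : ∀ s ∈ Icc 0 S, ∀ t ∈ Icc 0 T, 0 ≤ k (s, t))
    (hyp : ∀ s ∈ Icc 0 S, ∀ t ∈ Icc 0 T,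
      y (s, t) ≤ C + ∫ σ in (0:ℝ)..s, ∫ τ in (0:ℝ)..t, k (σ, τ) * y (σ, τ))
    {s t : ℝ} (hs : s ∈ Icc 0 S) (ht : t ∈ Icc 0 T) :
    y (s, t) ≤ C * exp (∫ σ in (0:ℝ)..s, ∫ τ in (0:ℝ)..t, k (σ, τ)) := by
  set u : ℝ → ℝ := fun σ => ∫ τ in (0:ℝ)..t, k (σ, τ) * y (σ, τ)
  have hu : Continuous u := continuous_parametric_intervalIntegral_of_continuous'
    (f := fun σ τ => k (σ, τ) * y (σ, τ)) (by fun_prop) 0 t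
  have hK : Continuous fun σ => ∫ τ in (0:ℝ)..t, k (σ, τ) :=
    continuous_parametric_intervalIntegral_of_continuous' (f := fun σ τ => k (σ, τ))
      (by fun_prop) 0 t
  have hky0 : ∀ σ ∈ Icc 0 S, ∀ τ ∈ Icc 0 T, 0 ≤ k (σ, τ) * y (σ, τ) := fun σ hσ τ hτ =>
    mul_nonneg (hk0 σ hσ τ hτ) (hy0 σ hσ τ hτ)
  refine (hyp s hs t ht).trans (add_integral_le_mul_exp_integral hu hK hs.1 fun σ hσ => ?_)
  have hσS : σ ∈ Icc 0 S := ⟨hσ.1, hσ.2.trans hs.2⟩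
  have hy_le : ∀ τ ∈ Icc 0 t, y (σ, τ) ≤ C + ∫ x in (0:ℝ)..σ, u x := fun τ hτ =>
    (hyp σ hσS τ ⟨hτ.1, hτ.2.trans ht.2⟩).trans <| add_le_add_right
      (integral_integral_mono_inner_upper (f := fun p => k p * y p) (by fun_prop)
        hσ.1 hτ.1 hτ.2 fun x hx z hz =>
          hky0 x ⟨hx.1, (hx.2.trans hσ.2).trans hs.2⟩ z ⟨hz.1, hz.2.trans ht.2⟩) C
  calc u σ ≤ ∫ τ in (0:ℝ)..t, k (σ, τ) * (C + ∫ x in (0:ℝ)..σ, u x) :=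
        integral_mono_on ht.1 (Continuous.intervalIntegrable (by fun_prop) _ _)
          (Continuous.intervalIntegrable (by fun_prop) _ _) fun τ hτ =>
            mul_le_mul_of_nonneg_left (hy_le τ hτ) (hk0 σ hσS τ ⟨hτ.1, hτ.2.trans ht.2⟩)
    _ = (∫ τ in (0:ℝ)..t, k (σ, τ)) * (C + ∫ x in (0:ℝ)..σ, u x) := integral_mul_const _ _

theorem gronwall_2d_general
    (S T : ℝ)
    (y k : ℝ × ℝ → ℝ) (C : ℝ)
    (hy_cont : ContinuousOn y (Set.Icc 0 S ×ˢ Set.Icc 0 T))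
    (hk_cont : ContinuousOn k (Set.Icc 0 S ×ˢ Set.Icc 0 T))
    (hy_nonneg : ∀ s ∈ Set.Icc 0 S, ∀ t ∈ Set.Icc 0 T, 0 ≤ y (s, t))
    (hk_nonneg : ∀ s ∈ Set.Icc 0 S, ∀ t ∈ Set.Icc 0 T, 0 ≤ k (s, t))
    (hyp : ∀ s ∈ Set.Icc 0 S, ∀ t ∈ Set.Icc 0 T,
      y (s, t) ≤ C + ∫ σ in (0:ℝ)..s, ∫ τ in (0:ℝ)..t, k (σ, τ) * y (σ, τ)) :
    ∀ s ∈ Set.Icc 0 S, ∀ t ∈ Set.Icc 0 T,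
      y (s, t) ≤ C * Real.exp (∫ σ in (0:ℝ)..s, ∫ τ in (0:ℝ)..t, k (σ, τ)) := by
  intro s hs t ht
  obtain ⟨y', hy'_cont, hy'⟩ :=
    hy_cont.exists_continuous_eqOn_Icc_prod (hs.1.trans hs.2) (ht.1.trans ht.2)
  obtain ⟨k', hk'_cont, hk'⟩ :=
    hk_cont.exists_continuous_eqOn_Icc_prod (hs.1.trans hs.2) (ht.1.trans ht.2)
  have hky' : EqOn (fun p => k' p * y' p) (fun p => k p * y p) (Icc 0 S ×ˢ Icc 0 T) :=
    fun p hp => congrArg₂ (· * ·) (hk' hp) (hy' hp)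
  rw [← hy' (mk_mem_prod hs ht), ← integral_integral_congr_Icc hk' hs ht]
  refine gronwall_2d_of_continuous hy'_cont hk'_cont (fun s hs t ht => ?_) (fun s hs t ht => ?_)
    (fun s hs t ht => ?_) hs ht
  · exact hy' (mk_mem_prod hs ht) ▸ hy_nonneg s hs t ht
  · exact hk' (mk_mem_prod hs ht) ▸ hk_nonneg s hs t ht
  · exact hy' (mk_mem_prod hs ht) ▸ integral_integral_congr_Icc hky' hs ht ▸ hyp s hs t ht

theorem gronwall_2d
    (S T : ℝ) (hS : 0 < S) (hT : 0 < T)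
    (y k : ℝ × ℝ → ℝ) (C : ℝ) (hC : 0 ≤ C)
    (hy_cont : ContinuousOn y (Set.Icc 0 S ×ˢ Set.Icc 0 T))
    (hk_cont : ContinuousOn k (Set.Icc 0 S ×ˢ Set.Icc 0 T))
    (hy_nonneg : ∀ s ∈ Set.Icc 0 S, ∀ t ∈ Set.Icc 0 T, 0 ≤ y (s, t))
    (hk_nonneg : ∀ s ∈ Set.Icc 0 S, ∀ t ∈ Set.Icc 0 T, 0 ≤ k (s, t))
    (hyp : ∀ s ∈ Set.Icc 0 S, ∀ t ∈ Set.Icc 0 T,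
      y (s, t) ≤ C + ∫ σ in (0:ℝ)..s, ∫ τ in (0:ℝ)..t, k (σ, τ) * y (σ, τ)) :
    ∀ s ∈ Set.Icc 0 S, ∀ t ∈ Set.Icc 0 T,
      y (s, t) ≤ C * Real.exp (∫ σ in (0:ℝ)..s, ∫ τ in (0:ℝ)..t, k (σ, τ)) :=
  gronwall_2d_general S T y k C hy_cont hk_cont hy_nonneg hk_nonneg hyp
end

section
/- Special case of the two-dimensional Gronwall inequality with C = 0: if y : [0,S] × [0,T] → ℝ is nonnegative continuous, k is nonnegative continuous, and y(s,t) ≤ ∫₀ˢ ∫₀ᵗ k(σ,τ) y(σ,τ) dτ dσ for all (s,t), then y ≡ 0 on [0,S] × [0,T]. -/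
set_option maxHeartbeats 1000000

open intervalIntegral MeasureTheory

lemma gronwall_integral_le_aux {s : ℝ} (hs : 0 ≤ s) {F G : ℝ → ℝ}
    (hG : IntervalIntegrable G volume 0 s)
    (hFG : ∀ x ∈ Set.Icc 0 s, F x ≤ G x)
    (hGnn : ∀ x ∈ Set.Icc 0 s, 0 ≤ G x) :
    (∫ x in (0:ℝ)..s, F x) ≤ ∫ x in (0:ℝ)..s, G x := by
  by_cases hF : IntervalIntegrable F volume 0 s
  · exact intervalIntegral.integral_mono_on hs hF hG hFG
  · rw [intervalIntegral.integral_undef hF]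
    exact intervalIntegral.integral_nonneg hs hGnn

theorem gronwall_2d_zero
    (S T : ℝ) (hS : 0 < S) (hT : 0 < T)
    (y k : ℝ × ℝ → ℝ)
    (hy_cont : ContinuousOn y (Set.Icc 0 S ×ˢ Set.Icc 0 T))
    (hk_cont : ContinuousOn k (Set.Icc 0 S ×ˢ Set.Icc 0 T))
    (hy_nonneg : ∀ s ∈ Set.Icc 0 S, ∀ t ∈ Set.Icc 0 T, 0 ≤ y (s, t))
    (hk_nonneg : ∀ s ∈ Set.Icc 0 S, ∀ t ∈ Set.Icc 0 T, 0 ≤ k (s, t))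
    (hyp : ∀ s ∈ Set.Icc 0 S, ∀ t ∈ Set.Icc 0 T,
      y (s, t) ≤ ∫ σ in (0:ℝ)..s, ∫ τ in (0:ℝ)..t, k (σ, τ) * y (σ, τ)) :
    ∀ s ∈ Set.Icc 0 S, ∀ t ∈ Set.Icc 0 T, y (s, t) = 0 := by
  have hcomp : IsCompact (Set.Icc (0:ℝ) S ×ˢ Set.Icc (0:ℝ) T) :=
    (isCompact_Icc).prod isCompact_Icc
  obtain ⟨M, hM⟩ := hcomp.exists_bound_of_continuousOn hy_cont
  obtain ⟨K, hK⟩ := hcomp.exists_bound_of_continuousOn hk_cont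
  have hmem00 : ((0:ℝ), (0:ℝ)) ∈ Set.Icc (0:ℝ) S ×ˢ Set.Icc (0:ℝ) T := by
    constructor <;> exact Set.mem_Icc.2 ⟨le_refl _, by positivity⟩
  have hM0 : 0 ≤ M := le_trans (norm_nonneg _) (hM _ hmem00)
  have hK0 : 0 ≤ K := le_trans (norm_nonneg _) (hK _ hmem00)
  have hyM : ∀ s ∈ Set.Icc (0:ℝ) S, ∀ t ∈ Set.Icc (0:ℝ) T, y (s, t) ≤ M := by
    intro s hs t ht
    exact le_trans (le_abs_self _) (hM (s, t) ⟨hs, ht⟩)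
  have hkK : ∀ s ∈ Set.Icc (0:ℝ) S, ∀ t ∈ Set.Icc (0:ℝ) T, k (s, t) ≤ K := by
    intro s hs t ht
    exact le_trans (le_abs_self _) (hK (s, t) ⟨hs, ht⟩)
  -- main induction
  have key : ∀ n : ℕ, ∀ s ∈ Set.Icc (0:ℝ) S, ∀ t ∈ Set.Icc (0:ℝ) T,
      y (s, t) ≤ M * K ^ n * (s * t) ^ n / ((n.factorial : ℝ)) ^ 2 := by
    intro n
    induction n with
    | zero => intro s hs t ht; simpa using hyM s hs t ht
    | succ n ih =>
      intro s hs t ht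
      obtain ⟨hs0, hsS⟩ := hs
      obtain ⟨ht0, htT⟩ := ht
      have hfac : (0:ℝ) < (n.factorial : ℝ) := by positivity
      -- inner bound for each σ ∈ [0,S]
      have inner : ∀ σ ∈ Set.Icc (0:ℝ) S,
          (∫ τ in (0:ℝ)..t, k (σ, τ) * y (σ, τ)) ≤
            K * (M * K ^ n * σ ^ n / ((n.factorial : ℝ)) ^ 2) * (t ^ (n+1) / (n+1)) := by
        intro σ hσ
        have hGint : IntervalIntegrable
            (fun τ => K * (M * K ^ n * σ ^ n / ((n.factorial : ℝ)) ^ 2) * τ ^ n)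
            volume 0 t := (Continuous.intervalIntegrable (by fun_prop) 0 t)
        have hb := gronwall_integral_le_aux ht0 hGint
          (F := fun τ => k (σ, τ) * y (σ, τ)) ?_ ?_
        · calc (∫ τ in (0:ℝ)..t, k (σ, τ) * y (σ, τ))
              ≤ ∫ τ in (0:ℝ)..t, K * (M * K ^ n * σ ^ n / ((n.factorial : ℝ)) ^ 2) * τ ^ n := hb
            _ = K * (M * K ^ n * σ ^ n / ((n.factorial : ℝ)) ^ 2) * (t ^ (n+1) / (n+1)) := by
                rw [intervalIntegral.integral_const_mul, integral_pow]
                push_cast; ring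
        · intro τ hτ
          have hτT : τ ∈ Set.Icc (0:ℝ) T := ⟨hτ.1, le_trans hτ.2 htT⟩
          have h1 := hkK σ hσ τ hτT
          have h2 := ih σ hσ τ hτT
          have h3 := hk_nonneg σ hσ τ hτT
          have h4 := hy_nonneg σ hσ τ hτT
          calc k (σ, τ) * y (σ, τ) ≤ K * (M * K ^ n * (σ * τ) ^ n / ((n.factorial : ℝ)) ^ 2) := by
                apply mul_le_mul h1 h2 h4 hK0
            _ = K * (M * K ^ n * σ ^ n / ((n.factorial : ℝ)) ^ 2) * τ ^ n := by
                rw [mul_pow]; ring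
        · intro τ hτ
          have hσ0 : (0:ℝ) ≤ σ := hσ.1
          have hτ0 : (0:ℝ) ≤ τ := hτ.1
          positivity
      -- outer bound
      have hGint2 : IntervalIntegrable
          (fun σ => K * (M * K ^ n * σ ^ n / ((n.factorial : ℝ)) ^ 2) * (t ^ (n+1) / (n+1)))
          volume 0 s := (Continuous.intervalIntegrable (by fun_prop) 0 s)
      have ht1 : (0:ℝ) ≤ t ^ (n+1) / (n+1) := by positivity
      have houter := gronwall_integral_le_aux hs0 hGint2
        (F := fun σ => ∫ τ in (0:ℝ)..t, k (σ, τ) * y (σ, τ)) ?_ ?_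
      · calc y (s, t) ≤ ∫ σ in (0:ℝ)..s, ∫ τ in (0:ℝ)..t, k (σ, τ) * y (σ, τ) :=
              hyp s ⟨hs0, hsS⟩ t ⟨ht0, htT⟩
          _ ≤ ∫ σ in (0:ℝ)..s,
                K * (M * K ^ n * σ ^ n / ((n.factorial : ℝ)) ^ 2) * (t ^ (n+1) / (n+1)) := houter
          _ = M * K ^ (n+1) * (s * t) ^ (n+1) / ((n+1).factorial : ℝ) ^ 2 := by
              have : (fun σ : ℝ => K * (M * K ^ n * σ ^ n / ((n.factorial : ℝ)) ^ 2)
                  * (t ^ (n+1) / (n+1)))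
                  = fun σ : ℝ => (K * M * K ^ n / ((n.factorial : ℝ)) ^ 2 * (t ^ (n+1) / (n+1)))
                  * σ ^ n := by funext σ; ring
              rw [this, intervalIntegral.integral_const_mul, integral_pow,
                Nat.factorial_succ]
              push_cast
              field_simp
              ring
      · intro σ hσ
        exact inner σ ⟨hσ.1, le_trans hσ.2 hsS⟩
      · intro σ hσ
        have hσ0 : (0:ℝ) ≤ σ := hσ.1
        positivity
  -- take the limit
  intro s hs t ht
  have hbd : ∀ n : ℕ, y (s, t) ≤ M * (K * S * T) ^ n / (n.factorial : ℝ) := by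
    intro n
    have hfac : (1:ℝ) ≤ (n.factorial : ℝ) := by exact_mod_cast Nat.one_le_iff_ne_zero.2 n.factorial_ne_zero
    have hfacpos : (0:ℝ) < (n.factorial : ℝ) := by positivity
    calc y (s, t) ≤ M * K ^ n * (s * t) ^ n / ((n.factorial : ℝ)) ^ 2 := key n s hs t ht
      _ ≤ M * K ^ n * (S * T) ^ n / ((n.factorial : ℝ)) ^ 2 := by
          have h1 : (s * t) ^ n ≤ (S * T) ^ n :=
            pow_le_pow_left₀ (mul_nonneg hs.1 ht.1)
              (mul_le_mul hs.2 ht.2 ht.1 (le_of_lt hS)) n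
          apply div_le_div_of_nonneg_right ?_ (by positivity)
          have : (0:ℝ) ≤ M * K ^ n := by positivity
          nlinarith
      _ = M * (K * S * T) ^ n / ((n.factorial : ℝ)) ^ 2 := by rw [mul_pow, mul_pow]; ring
      _ ≤ M * (K * S * T) ^ n / (n.factorial : ℝ) := by
          apply div_le_div_of_nonneg_left (by positivity) hfacpos
          nlinarith
  have htend : Filter.Tendsto (fun n : ℕ => M * (K * S * T) ^ n / (n.factorial : ℝ))
      Filter.atTop (nhds 0) := by
    have := (FloorSemiring.tendsto_pow_div_factorial_atTop (K * S * T)).const_mul M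
    simpa [mul_div_assoc] using this
  have hle : y (s, t) ≤ 0 := ge_of_tendsto' htend hbd
  exact le_antisymm hle (hy_nonneg s hs t ht)
end

section
/- Uniqueness for a two-dimensional Volterra integral equation with piecewise kernel: under the hypotheses below, if z and v are continuous solutions of z(s,t) = g(s,t) + Σ_{p=1}^{m} ∫_{a_{p-1}(s)}^{a_p(s)} ∫_{b_{p-1}(t)}^{b_p(t)} k_p(s,t,σ,τ) φ(z(σ,τ)) dτ dσ on Ω = [0,A] × [0,A], then z = v on Ω. -/
/-!
Let `K` bound the kernels on `Ω × Ω`. Subtracting the two equations, a bound `|z - v| ≤ B σⁿ` on `Ω`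
improves to `|z - v| (s, t) ≤ A K L B s ^ (n + 1) / (n + 1)`: every inner interval has length at
most `A`, and the outer intervals `[aₚ(s), aₚ₊₁(s)]` tile `[0, s]`. Starting from `|z - v| ≤ M`,
induction gives `|z - v| (s, t) ≤ M (A K L s)ⁿ / n!` for every `n`, and this tends to `0`.
-/

open MeasureTheory Set Filter Topology intervalIntegral
open scoped NNReal

section Iteration

variable {X : Type*} {S : Set X} {u ρ : X → ℝ} {M C : ℝ}
  (hM : 0 ≤ M) (hC : 0 ≤ C) (hu : ∀ x ∈ S, u x ≤ M)
  (hstep : ∀ (n : ℕ) (B : ℝ), 0 ≤ B → (∀ x ∈ S, u x ≤ B * ρ x ^ n) →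
    ∀ x ∈ S, u x ≤ C * B * (ρ x ^ (n + 1) / (n + 1)))
include hM hC hu hstep

theorem le_mul_pow_div_factorial_of_step (n : ℕ) :
    ∀ x ∈ S, u x ≤ M * C ^ n / n.factorial * ρ x ^ n := by
  induction n with
  | zero => simpa using hu
  | succ n ih =>
    intro x hx
    refine (hstep n _ (by positivity) ih x hx).trans_eq ?_
    rw [Nat.factorial_succ]
    push_cast
    field_simp
    ring

theorem nonpos_of_step : ∀ x ∈ S, u x ≤ 0 := by
  intro x hx
  have hlim : Tendsto (fun n : ℕ ↦ M * ((C * ρ x) ^ n / n.factorial)) atTop (𝓝 0) := by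
    simpa using (FloorSemiring.tendsto_pow_div_factorial_atTop (C * ρ x)).const_mul M
  refine ge_of_tendsto' hlim fun n ↦ ?_
  exact (le_mul_pow_div_factorial_of_step hM hC hu hstep n x hx).trans_eq (by ring)

end Iteration

theorem IsCompact.exists_bound_of_forall_continuousOn {X ι : Type*} [TopologicalSpace X]
    {s : Set X} (hs : IsCompact s) (I : Finset ι) {f : ι → X → ℝ}
    (hf : ∀ i ∈ I, ContinuousOn (f i) s) :
    ∃ K, 0 ≤ K ∧ ∀ i ∈ I, ∀ x ∈ s, |f i x| ≤ K := by
  obtain ⟨K, hK⟩ := hs.exists_bound_of_continuousOn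
    (continuousOn_finsetSum I fun i hi ↦ (hf i hi).abs)
  refine ⟨max K 0, le_max_right _ _, fun i hi x hx ↦ ?_⟩
  calc |f i x| ≤ ∑ j ∈ I, |f j x| := Finset.single_le_sum (fun j _ ↦ abs_nonneg (f j x)) hi
    _ ≤ ‖∑ j ∈ I, |f j x|‖ := Real.le_norm_self _
    _ ≤ max K 0 := (hK x hx).trans (le_max_left _ _)

theorem continuousOn_parametric_intervalIntegral_of_continuousOn {F : ℝ × ℝ → ℝ} {S T : Set ℝ}
    (hS : IsClosed S) (hT : IsClosed T) (hF : ContinuousOn F (S ×ˢ T)) {c d : ℝ}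
    (hcd : uIcc c d ⊆ T) :
    ContinuousOn (fun σ ↦ ∫ τ in c..d, F (σ, τ)) S := by
  obtain ⟨G, hG⟩ := ContinuousMap.exists_restrict_eq (hS.prod hT) ⟨_, hF.domRestrict⟩
  have hGF : ∀ w ∈ S ×ˢ T, G w = F w := fun w hw ↦ congr($hG ⟨w, hw⟩)
  refine (continuous_parametric_intervalIntegral_of_continuous' (μ := volume)
    (f := fun σ τ ↦ G (σ, τ)) (by fun_prop) c d).continuousOn.congr fun σ hσ ↦ ?_
  exact integral_congr fun τ hτ ↦ (hGF _ ⟨hσ, hcd hτ⟩).symm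

theorem integral_integral_sub_of_continuousOn {F G : ℝ × ℝ → ℝ} {S T : Set ℝ}
    (hS : IsClosed S) (hT : IsClosed T) (hF : ContinuousOn F (S ×ˢ T))
    (hG : ContinuousOn G (S ×ˢ T)) {a₁ a₂ b₁ b₂ : ℝ} (ha : uIcc a₁ a₂ ⊆ S) (hb : uIcc b₁ b₂ ⊆ T) :
    (∫ σ in a₁..a₂, ∫ τ in b₁..b₂, F (σ, τ)) - (∫ σ in a₁..a₂, ∫ τ in b₁..b₂, G (σ, τ)) =
      ∫ σ in a₁..a₂, ∫ τ in b₁..b₂, (F (σ, τ) - G (σ, τ)) := by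
  have houter : ∀ H : ℝ × ℝ → ℝ, ContinuousOn H (S ×ˢ T) →
      IntervalIntegrable (fun σ ↦ ∫ τ in b₁..b₂, H (σ, τ)) volume a₁ a₂ := fun H hH ↦
    ((continuousOn_parametric_intervalIntegral_of_continuousOn hS hT hH hb).mono
      ha).intervalIntegrable
  have hinner : ∀ H : ℝ × ℝ → ℝ, ContinuousOn H (S ×ˢ T) → ∀ σ ∈ S,
      IntervalIntegrable (fun τ ↦ H (σ, τ)) volume b₁ b₂ := fun H hH σ hσ ↦
    (hH.comp (Continuous.prodMk_right σ).continuousOn fun τ hτ ↦ ⟨hσ, hb hτ⟩).intervalIntegrable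
  rw [← integral_sub (houter F hF) (houter G hG)]
  exact integral_congr fun σ hσ ↦
    (integral_sub (hinner F hF σ (ha hσ)) (hinner G hG σ (ha hσ))).symm

theorem abs_integral_integral_le_of_abs_le_mul_pow {H : ℝ → ℝ → ℝ} {a₁ a₂ b₁ b₂ D : ℝ} {n : ℕ}
    (ha : a₁ ≤ a₂) (hH : ∀ σ ∈ Ioc a₁ a₂, ∀ τ ∈ uIoc b₁ b₂, |H σ τ| ≤ D * σ ^ n) :
    |∫ σ in a₁..a₂, ∫ τ in b₁..b₂, H σ τ| ≤
      |b₂ - b₁| * D * ((a₂ ^ (n + 1) - a₁ ^ (n + 1)) / (n + 1)) := by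
  calc |∫ σ in a₁..a₂, ∫ τ in b₁..b₂, H σ τ| ≤ ∫ σ in a₁..a₂, |b₂ - b₁| * D * σ ^ n := by
        rw [← Real.norm_eq_abs]
        refine norm_integral_le_of_norm_le ha (ae_of_all _ fun σ hσ ↦ ?_)
          ((continuous_const.mul (continuous_pow n)).intervalIntegrable _ _)
        exact (intervalIntegral.norm_integral_le_of_norm_le_const fun τ hτ ↦
          (Real.norm_eq_abs _).trans_le (hH σ hσ τ hτ)).trans_eq (by ring)
    _ = |b₂ - b₁| * D * ((a₂ ^ (n + 1) - a₁ ^ (n + 1)) / (n + 1)) := by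
        rw [intervalIntegral.integral_const_mul, integral_pow]

theorem abs_sum_integral_integral_sub_le {A K B : ℝ} {L : ℝ≥0} {m n : ℕ} {α β : ℕ → ℝ}
    {κ : ℕ → ℝ × ℝ → ℝ} {φ : ℝ → ℝ} {z v : ℝ × ℝ → ℝ}
    (hα : ∀ p, α p ∈ Icc 0 A) (hβ : ∀ p, β p ∈ Icc 0 A) (hα_mono : ∀ p < m, α p ≤ α (p + 1))
    (hκ : ∀ p < m, ContinuousOn (κ p) (Icc 0 A ×ˢ Icc 0 A))
    (hκK : ∀ p < m, ∀ w ∈ Icc 0 A ×ˢ Icc 0 A, |κ p w| ≤ K) (hK : 0 ≤ K)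
    (hφ : LipschitzWith L φ) (hz : ContinuousOn z (Icc 0 A ×ˢ Icc 0 A))
    (hv : ContinuousOn v (Icc 0 A ×ˢ Icc 0 A)) (hB : 0 ≤ B)
    (hzv : ∀ w ∈ Icc 0 A ×ˢ Icc 0 A, |z w - v w| ≤ B * w.1 ^ n) :
    |(∑ p ∈ Finset.range m, ∫ σ in α p..α (p + 1), ∫ τ in β p..β (p + 1),
        κ p (σ, τ) * φ (z (σ, τ))) -
      ∑ p ∈ Finset.range m, ∫ σ in α p..α (p + 1), ∫ τ in β p..β (p + 1),
        κ p (σ, τ) * φ (v (σ, τ))| ≤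
      A * (K * L * B) * ((α m ^ (n + 1) - α 0 ^ (n + 1)) / (n + 1)) := by
  rw [← Finset.sum_sub_distrib, ← Finset.sum_range_sub (fun p ↦ α p ^ (n + 1)), Finset.sum_div,
    Finset.mul_sum]
  refine (Finset.abs_sum_le_sum_abs _ _).trans (Finset.sum_le_sum fun p hp ↦ ?_)
  replace hp := Finset.mem_range.mp hp
  have hF : ∀ y, ContinuousOn y (Icc 0 A ×ˢ Icc 0 A) →
      ContinuousOn (fun w ↦ κ p w * φ (y w)) (Icc 0 A ×ˢ Icc 0 A) := fun y hy ↦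
    (hκ p hp).mul (hφ.continuous.comp_continuousOn hy)
  rw [integral_integral_sub_of_continuousOn isClosed_Icc isClosed_Icc (hF z hz) (hF v hv)
    (uIcc_subset_Icc (hα p) (hα (p + 1))) (uIcc_subset_Icc (hβ p) (hβ (p + 1)))]
  refine (abs_integral_integral_le_of_abs_le_mul_pow (D := K * L * B) (n := n) (hα_mono p hp)
    fun σ hσ τ hτ ↦ ?_).trans ?_
  · have hw : (σ, τ) ∈ Icc 0 A ×ˢ Icc 0 A :=
      ⟨uIcc_subset_Icc (hα p) (hα (p + 1)) (Ioc_subset_Icc_self.trans Icc_subset_uIcc hσ),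
        uIcc_subset_Icc (hβ p) (hβ (p + 1)) (uIoc_subset_uIcc hτ)⟩
    have hLip : |φ (z (σ, τ)) - φ (v (σ, τ))| ≤ L * (B * σ ^ n) := by
      simpa only [Real.dist_eq] using
        (hφ.dist_le_mul _ _).trans (mul_le_mul_of_nonneg_left (hzv _ hw) L.2)
    calc |κ p (σ, τ) * φ (z (σ, τ)) - κ p (σ, τ) * φ (v (σ, τ))|
        = |κ p (σ, τ)| * |φ (z (σ, τ)) - φ (v (σ, τ))| := by rw [← mul_sub, abs_mul]
      _ ≤ K * (L * (B * σ ^ n)) := mul_le_mul (hκK p hp _ hw) hLip (abs_nonneg _) hK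
      _ = K * L * B * σ ^ n := by ring
  · have hpow : α p ^ (n + 1) ≤ α (p + 1) ^ (n + 1) :=
      pow_le_pow_left₀ (hα p).1 (hα_mono p hp) _
    have hβA : |β (p + 1) - β p| ≤ A := abs_sub_le_iff.2
      ⟨by linarith [(hβ p).1, (hβ (p + 1)).2], by linarith [(hβ (p + 1)).1, (hβ p).2]⟩
    gcongr

theorem volterra_2d_piecewise_uniqueness_general
    (A : ℝ) (m : ℕ)
    (a b : ℕ → ℝ → ℝ)
    (ha_maps : ∀ p, ∀ s ∈ Set.Icc 0 A, a p s ∈ Set.Icc 0 A)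
    (hb_maps : ∀ p, ∀ t ∈ Set.Icc 0 A, b p t ∈ Set.Icc 0 A)
    (ha0 : ∀ s ∈ Set.Icc 0 A, a 0 s = 0)
    (ham : ∀ s ∈ Set.Icc 0 A, a m s = s)
    (ha_mono : ∀ p < m, ∀ s ∈ Set.Icc 0 A, a p s ≤ a (p + 1) s)
    (k : ℕ → ℝ × ℝ → ℝ × ℝ → ℝ)
    (hk_cont : ∀ p, ContinuousOn (fun q : (ℝ × ℝ) × (ℝ × ℝ) => k p q.1 q.2)
      ((Set.Icc 0 A ×ˢ Set.Icc 0 A) ×ˢ (Set.Icc 0 A ×ˢ Set.Icc 0 A)))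
    (g : ℝ × ℝ → ℝ)
    (φ : ℝ → ℝ) (L : ℝ)
    (hφ : ∀ x y : ℝ, |φ x - φ y| ≤ L * |x - y|)
    (z v : ℝ × ℝ → ℝ)
    (hz_cont : ContinuousOn z (Set.Icc 0 A ×ˢ Set.Icc 0 A))
    (hv_cont : ContinuousOn v (Set.Icc 0 A ×ˢ Set.Icc 0 A))
    (hz : ∀ s ∈ Set.Icc 0 A, ∀ t ∈ Set.Icc 0 A,
      z (s, t) = g (s, t) + ∑ p ∈ Finset.range m,
        ∫ σ in (a p s)..(a (p + 1) s), ∫ τ in (b p t)..(b (p + 1) t),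
          k (p + 1) (s, t) (σ, τ) * φ (z (σ, τ)))
    (hv : ∀ s ∈ Set.Icc 0 A, ∀ t ∈ Set.Icc 0 A,
      v (s, t) = g (s, t) + ∑ p ∈ Finset.range m,
        ∫ σ in (a p s)..(a (p + 1) s), ∫ τ in (b p t)..(b (p + 1) t),
          k (p + 1) (s, t) (σ, τ) * φ (v (σ, τ))) :
    ∀ s ∈ Set.Icc 0 A, ∀ t ∈ Set.Icc 0 A, z (s, t) = v (s, t) := by
  intro s hs t ht
  have hΩ : IsCompact (Icc 0 A ×ˢ Icc 0 A) := isCompact_Icc.prod isCompact_Icc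
  have hA : 0 ≤ A := hs.1.trans hs.2
  have hφ' : LipschitzWith L.toNNReal φ :=
    LipschitzWith.of_dist_le' fun x y ↦ by simpa only [Real.dist_eq] using hφ x y
  obtain ⟨M, hM⟩ := hΩ.exists_bound_of_continuousOn (hz_cont.sub hv_cont)
  obtain ⟨K, hK, hkK⟩ := (hΩ.prod hΩ).exists_bound_of_forall_continuousOn (Finset.range m)
    fun p _ ↦ hk_cont (p + 1)
  have hle := nonpos_of_step (S := Icc 0 A ×ˢ Icc 0 A) (u := fun w ↦ |z w - v w|) (ρ := Prod.fst)
    ((norm_nonneg _).trans (hM (s, t) ⟨hs, ht⟩)) (by positivity : 0 ≤ A * K * L.toNNReal)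
    (fun w hw ↦ by simpa using hM w hw) ?_ (s, t) ⟨hs, ht⟩
  · simpa [sub_eq_zero] using hle
  rintro n B hB hB_le ⟨σ, τ⟩ ⟨hσ, hτ⟩
  have := abs_sum_integral_integral_sub_le (α := fun p ↦ a p σ) (β := fun p ↦ b p τ)
    (κ := fun p ↦ k (p + 1) (σ, τ)) (fun p ↦ ha_maps p σ hσ) (fun p ↦ hb_maps p τ hτ)
    (fun p hp ↦ ha_mono p hp σ hσ)
    (fun p _ ↦ (hk_cont (p + 1)).comp (Continuous.prodMk_right (σ, τ)).continuousOn
      fun w hw ↦ ⟨⟨hσ, hτ⟩, hw⟩)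
    (fun p hp w hw ↦ hkK p (Finset.mem_range.2 hp) ((σ, τ), w) ⟨⟨hσ, hτ⟩, hw⟩) hK
    hφ' hz_cont hv_cont hB hB_le
  dsimp only
  rw [hz σ hσ τ hτ, hv σ hσ τ hτ, add_sub_add_left_eq_sub]
  refine this.trans_eq ?_
  simp only [ham σ hσ, ha0 σ hσ]
  ring

theorem volterra_2d_piecewise_uniqueness
    (A : ℝ) (hA : 0 < A) (m : ℕ)
    (a b : ℕ → ℝ → ℝ)
    (ha_cont : ∀ p, ContinuousOn (a p) (Set.Icc 0 A))
    (hb_cont : ∀ p, ContinuousOn (b p) (Set.Icc 0 A))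
    (ha_maps : ∀ p, ∀ s ∈ Set.Icc 0 A, a p s ∈ Set.Icc 0 A)
    (hb_maps : ∀ p, ∀ t ∈ Set.Icc 0 A, b p t ∈ Set.Icc 0 A)
    (ha0 : ∀ s ∈ Set.Icc 0 A, a 0 s = 0)
    (ham : ∀ s ∈ Set.Icc 0 A, a m s = s)
    (ha_mono : ∀ p < m, ∀ s ∈ Set.Icc 0 A, a p s ≤ a (p + 1) s)
    (hb0 : ∀ t ∈ Set.Icc 0 A, b 0 t = 0)
    (hbm : ∀ t ∈ Set.Icc 0 A, b m t = t)
    (hb_mono : ∀ p < m, ∀ t ∈ Set.Icc 0 A, b p t ≤ b (p + 1) t)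
    (k : ℕ → ℝ × ℝ → ℝ × ℝ → ℝ)
    (hk_cont : ∀ p, ContinuousOn (fun q : (ℝ × ℝ) × (ℝ × ℝ) => k p q.1 q.2)
      ((Set.Icc 0 A ×ˢ Set.Icc 0 A) ×ˢ (Set.Icc 0 A ×ˢ Set.Icc 0 A)))
    (hk_nonneg : ∀ p, ∀ x ∈ Set.Icc 0 A ×ˢ Set.Icc 0 A,
      ∀ w ∈ Set.Icc 0 A ×ˢ Set.Icc 0 A, (0:ℝ) ≤ k p x w)
    (g : ℝ × ℝ → ℝ) (hg : ContinuousOn g (Set.Icc 0 A ×ˢ Set.Icc 0 A))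
    (φ : ℝ → ℝ) (L : ℝ) (hL : 0 < L)
    (hφ : ∀ x y : ℝ, |φ x - φ y| ≤ L * |x - y|)
    (z v : ℝ × ℝ → ℝ)
    (hz_cont : ContinuousOn z (Set.Icc 0 A ×ˢ Set.Icc 0 A))
    (hv_cont : ContinuousOn v (Set.Icc 0 A ×ˢ Set.Icc 0 A))
    (hz : ∀ s ∈ Set.Icc 0 A, ∀ t ∈ Set.Icc 0 A,
      z (s, t) = g (s, t) + ∑ p ∈ Finset.range m,
        ∫ σ in (a p s)..(a (p + 1) s), ∫ τ in (b p t)..(b (p + 1) t),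
          k (p + 1) (s, t) (σ, τ) * φ (z (σ, τ)))
    (hv : ∀ s ∈ Set.Icc 0 A, ∀ t ∈ Set.Icc 0 A,
      v (s, t) = g (s, t) + ∑ p ∈ Finset.range m,
        ∫ σ in (a p s)..(a (p + 1) s), ∫ τ in (b p t)..(b (p + 1) t),
          k (p + 1) (s, t) (σ, τ) * φ (v (σ, τ))) :
    ∀ s ∈ Set.Icc 0 A, ∀ t ∈ Set.Icc 0 A, z (s, t) = v (s, t) :=
  volterra_2d_piecewise_uniqueness_general A m a b ha_maps hb_maps ha0 ham ha_mono k hk_cont g φ L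
    hφ z v hz_cont hv_cont hz hv
end

section
/- Picard iteration estimate: with z₀ = g and z_{n+1}(s,t) = g(s,t) + Σ_{p=1}^{m} ∫_{a_{p-1}(s)}^{a_p(s)} ∫_{b_{p-1}(t)}^{b_p(t)} k_p(s,t,σ,τ) φ(z_n(σ,τ)) dτ dσ, define M = Σ_{p=1}^{m} max k_p and D* = sup_{(σ,τ)∈Ω} |z₀(σ,τ) − z₁(σ,τ)|. Then for all n ≥ 0 and all (s,t) ∈ Ω, |z_n(s,t) − z_{n+1}(s,t)| ≤ (M L s t)ⁿ / (n!)² · D*. -/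
/-!
The differences `dₙ = zₙ - zₙ₊₁` satisfy `|dₙ₊₁(s,t)| ≤ ∑ₚ Mₚ L ∫∫ |dₙ|`, the double integrals
running over sub-rectangles of `[0,s] × [0,t]`. Hence a bound `|dₙ(σ,τ)| ≤ c σⁿ τⁿ` propagates to
`|dₙ₊₁(s,t)| ≤ c M L s^(n+1) t^(n+1) / (n+1)²`, and induction from `|d₀| ≤ D*` produces `(n!)²`.
-/

open MeasureTheory Set
open scoped NNReal

theorem le_of_forall_le_succ_of_le {α : Type*} [Preorder α] {u : ℕ → α} {m : ℕ}
    (hu : ∀ p < m, u p ≤ u (p + 1)) {i j : ℕ} (hij : i ≤ j) (hjm : j ≤ m) : u i ≤ u j := by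
  induction hij with
  | refl => rfl
  | step _ ih => exact (ih (by omega)).trans (hu _ (by omega))

theorem partition_bounds {u : ℕ → ℝ} {m : ℕ} {s : ℝ} (h0 : u 0 = 0) (hm : u m = s)
    (hu : ∀ p < m, u p ≤ u (p + 1)) {p : ℕ} (hp : p < m) : 0 ≤ u p ∧ u (p + 1) ≤ s :=
  ⟨h0 ▸ le_of_forall_le_succ_of_le hu p.zero_le hp.le, hm ▸ le_of_forall_le_succ_of_le hu hp le_rfl⟩

theorem IsCompact.le_iSup_of_continuousOn {X : Type*} [TopologicalSpace X] {S : Set X}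
    (hS : IsCompact S) {f : X → ℝ} (hf : ContinuousOn f S) {x : X} (hx : x ∈ S) :
    f x ≤ ⨆ w : S, f w :=
  le_ciSup (image_eq_range f S ▸ hS.bddAbove_image hf) ⟨x, hx⟩

theorem ContinuousOn.exists_continuous_eqOn {X : Type*} [TopologicalSpace X] [NormalSpace X]
    {S : Set X} {f : X → ℝ} (hf : ContinuousOn f S) (hS : IsClosed S) :
    ∃ F : X → ℝ, Continuous F ∧ EqOn F f S := by
  obtain ⟨F, hF⟩ := ContinuousMap.exists_restrict_eq hS ⟨S.domRestrict f, hf.domRestrict⟩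
  exact ⟨F, F.continuous, fun x hx => congr($hF ⟨x, hx⟩)⟩

theorem intervalIntegrable_intervalIntegral_of_continuousOn {f : ℝ × ℝ → ℝ}
    {α₀ α₁ β₀ β₁ : ℝ} (hf : ContinuousOn f (uIcc α₀ α₁ ×ˢ uIcc β₀ β₁)) :
    IntervalIntegrable (fun σ => ∫ τ in β₀..β₁, f (σ, τ)) volume α₀ α₁ := by
  obtain ⟨F, hF, hFf⟩ := hf.exists_continuous_eqOn (isClosed_Icc.prod isClosed_Icc)
  have hF_int : Continuous fun σ => ∫ τ in β₀..β₁, F (σ, τ) := by fun_prop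
  refine (hF_int.continuousOn.congr fun σ hσ => ?_).intervalIntegrable
  exact intervalIntegral.integral_congr fun τ hτ => (hFf ⟨hσ, hτ⟩).symm

theorem ContinuousOn.intervalIntegrable_slice {f : ℝ × ℝ → ℝ} {S : Set ℝ} {β₀ β₁ σ : ℝ}
    (hf : ContinuousOn f (S ×ˢ uIcc β₀ β₁)) (hσ : σ ∈ S) :
    IntervalIntegrable (fun τ => f (σ, τ)) volume β₀ β₁ :=
  (hf.comp (Continuous.continuousOn (by fun_prop)) fun _ hτ => ⟨hσ, hτ⟩).intervalIntegrable

theorem intervalIntegral_intervalIntegral_sub {f g : ℝ × ℝ → ℝ} {α₀ α₁ β₀ β₁ : ℝ}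
    (hf : ContinuousOn f (uIcc α₀ α₁ ×ˢ uIcc β₀ β₁))
    (hg : ContinuousOn g (uIcc α₀ α₁ ×ˢ uIcc β₀ β₁)) :
    (∫ σ in α₀..α₁, ∫ τ in β₀..β₁, f (σ, τ)) - ∫ σ in α₀..α₁, ∫ τ in β₀..β₁, g (σ, τ) =
      ∫ σ in α₀..α₁, ∫ τ in β₀..β₁, (f (σ, τ) - g (σ, τ)) := by
  rw [← intervalIntegral.integral_sub (intervalIntegrable_intervalIntegral_of_continuousOn hf)
    (intervalIntegrable_intervalIntegral_of_continuousOn hg)]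
  exact intervalIntegral.integral_congr fun σ hσ =>
    (intervalIntegral.integral_sub (hf.intervalIntegrable_slice hσ)
      (hg.intervalIntegrable_slice hσ)).symm

theorem intervalIntegral_pow_le {β₀ β₁ t : ℝ} (h₀ : 0 ≤ β₀) (h₀₁ : β₀ ≤ β₁) (h₁ : β₁ ≤ t)
    (n : ℕ) : ∫ τ in β₀..β₁, τ ^ n ≤ t ^ (n + 1) / (n + 1) := by
  rw [integral_pow]
  gcongr
  calc β₁ ^ (n + 1) - β₀ ^ (n + 1) ≤ β₁ ^ (n + 1) := sub_le_self _ (by positivity)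
    _ ≤ t ^ (n + 1) := by gcongr; linarith

theorem abs_intervalIntegral_le_of_abs_le_mul_pow {f : ℝ → ℝ} {c β₀ β₁ t : ℝ} {n : ℕ}
    (hc : 0 ≤ c) (h₀ : 0 ≤ β₀) (h₀₁ : β₀ ≤ β₁) (h₁ : β₁ ≤ t)
    (hf : ∀ τ ∈ Icc β₀ β₁, |f τ| ≤ c * τ ^ n) :
    |∫ τ in β₀..β₁, f τ| ≤ c * (t ^ (n + 1) / (n + 1)) := by
  calc |∫ τ in β₀..β₁, f τ| ≤ ∫ τ in β₀..β₁, c * τ ^ n :=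
        intervalIntegral.norm_integral_le_of_norm_le (f := f) h₀₁
          (ae_of_all _ fun τ hτ => hf τ (Ioc_subset_Icc_self hτ))
          ((by fun_prop : Continuous fun τ : ℝ => c * τ ^ n).intervalIntegrable _ _)
    _ = c * ∫ τ in β₀..β₁, τ ^ n := intervalIntegral.integral_const_mul _ _
    _ ≤ c * (t ^ (n + 1) / (n + 1)) := by gcongr; exact intervalIntegral_pow_le h₀ h₀₁ h₁ n

theorem abs_intervalIntegral_intervalIntegral_le_of_abs_le_mul_pow {f : ℝ × ℝ → ℝ}
    {c s t α₀ α₁ β₀ β₁ : ℝ} {n : ℕ} (hc : 0 ≤ c)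
    (hα₀ : 0 ≤ α₀) (hα₀₁ : α₀ ≤ α₁) (hα₁ : α₁ ≤ s) (hβ₀ : 0 ≤ β₀) (hβ₀₁ : β₀ ≤ β₁) (hβ₁ : β₁ ≤ t)
    (hf : ∀ w ∈ Icc α₀ α₁ ×ˢ Icc β₀ β₁, |f w| ≤ c * w.1 ^ n * w.2 ^ n) :
    |∫ σ in α₀..α₁, ∫ τ in β₀..β₁, f (σ, τ)| ≤
      c * (s ^ (n + 1) / (n + 1)) * (t ^ (n + 1) / (n + 1)) := by
  have ht : 0 ≤ t := by linarith
  refine (abs_intervalIntegral_le_of_abs_le_mul_pow (c := c * (t ^ (n + 1) / (n + 1)))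
    (mul_nonneg hc (by positivity)) hα₀ hα₀₁ hα₁ fun σ hσ => ?_).trans_eq (by ring)
  have hσ₀ : 0 ≤ σ := hα₀.trans hσ.1
  calc |∫ τ in β₀..β₁, f (σ, τ)| ≤ c * σ ^ n * (t ^ (n + 1) / (n + 1)) :=
        abs_intervalIntegral_le_of_abs_le_mul_pow (mul_nonneg hc (pow_nonneg hσ₀ n)) hβ₀ hβ₀₁ hβ₁
          fun τ hτ => hf (σ, τ) ⟨hσ, hτ⟩
    _ = c * (t ^ (n + 1) / (n + 1)) * σ ^ n := by ring

theorem abs_sub_intervalIntegral_kernel_mul_le {S : Set (ℝ × ℝ)} {κ u v : ℝ × ℝ → ℝ}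
    {φ : ℝ → ℝ} {K c s t α₀ α₁ β₀ β₁ : ℝ} {L : ℝ≥0} {n : ℕ}
    (hα₀ : 0 ≤ α₀) (hα₀₁ : α₀ ≤ α₁) (hα₁ : α₁ ≤ s) (hβ₀ : 0 ≤ β₀) (hβ₀₁ : β₀ ≤ β₁) (hβ₁ : β₁ ≤ t)
    (hRS : Icc α₀ α₁ ×ˢ Icc β₀ β₁ ⊆ S) (hκ : ContinuousOn κ S) (hκ_nonneg : ∀ w ∈ S, 0 ≤ κ w)
    (hκK : ∀ w ∈ S, κ w ≤ K) (hφ : LipschitzWith L φ) (hu : ContinuousOn u S)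
    (hv : ContinuousOn v S) (hc : 0 ≤ c) (huv : ∀ w ∈ S, |u w - v w| ≤ c * w.1 ^ n * w.2 ^ n) :
    |(∫ σ in α₀..α₁, ∫ τ in β₀..β₁, κ (σ, τ) * φ (u (σ, τ))) -
        ∫ σ in α₀..α₁, ∫ τ in β₀..β₁, κ (σ, τ) * φ (v (σ, τ))| ≤
      K * L * c * (s ^ (n + 1) / (n + 1)) * (t ^ (n + 1) / (n + 1)) := by
  have hR : uIcc α₀ α₁ ×ˢ uIcc β₀ β₁ ⊆ S := by rwa [uIcc_of_le hα₀₁, uIcc_of_le hβ₀₁]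
  have hK : 0 ≤ K :=
    have h₀ : (α₀, β₀) ∈ S := hRS ⟨left_mem_Icc.2 hα₀₁, left_mem_Icc.2 hβ₀₁⟩
    (hκ_nonneg _ h₀).trans (hκK _ h₀)
  have hκφ {w : ℝ × ℝ → ℝ} (hw : ContinuousOn w S) :
      ContinuousOn (fun x => κ x * φ (w x)) (uIcc α₀ α₁ ×ˢ uIcc β₀ β₁) :=
    (hκ.mul (hφ.continuous.comp_continuousOn hw)).mono hR
  rw [intervalIntegral_intervalIntegral_sub (hκφ hu) (hκφ hv)]
  refine abs_intervalIntegral_intervalIntegral_le_of_abs_le_mul_pow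
    (f := fun w => κ w * φ (u w) - κ w * φ (v w)) (by positivity)
    hα₀ hα₀₁ hα₁ hβ₀ hβ₀₁ hβ₁ fun w hw => ?_
  have hwS := hRS hw
  have hw₀ : 0 ≤ w.1 ^ n * w.2 ^ n :=
    mul_nonneg (pow_nonneg (hα₀.trans hw.1.1) n) (pow_nonneg (hβ₀.trans hw.2.1) n)
  calc |κ w * φ (u w) - κ w * φ (v w)| = κ w * |φ (u w) - φ (v w)| := by
        rw [← mul_sub, abs_mul, abs_of_nonneg (hκ_nonneg w hwS)]
    _ ≤ K * (L * (c * w.1 ^ n * w.2 ^ n)) := by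
        gcongr
        · exact hκK w hwS
        · calc |φ (u w) - φ (v w)| ≤ L * |u w - v w| := hφ.dist_le_mul (u w) (v w)
            _ ≤ L * (c * w.1 ^ n * w.2 ^ n) := by gcongr; exact huv w hwS
    _ = K * L * c * w.1 ^ n * w.2 ^ n := by ring

theorem picard_coeff_succ (M L D s t : ℝ) (n : ℕ) :
    M * L * ((M * L) ^ n / (n.factorial : ℝ) ^ 2 * D) * (s ^ (n + 1) / (n + 1)) *
        (t ^ (n + 1) / (n + 1)) =
      (M * L * s * t) ^ (n + 1) / ((n + 1).factorial : ℝ) ^ 2 * D := by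
  rw [Nat.factorial_succ]
  push_cast
  field_simp
  ring

theorem picard_iteration_estimate_general
    (A : ℝ) (m : ℕ)
    (a b : ℕ → ℝ → ℝ)
    (ha0 : ∀ s ∈ Set.Icc 0 A, a 0 s = 0)
    (ham : ∀ s ∈ Set.Icc 0 A, a m s = s)
    (ha_mono : ∀ p < m, ∀ s ∈ Set.Icc 0 A, a p s ≤ a (p + 1) s)
    (hb0 : ∀ t ∈ Set.Icc 0 A, b 0 t = 0)
    (hbm : ∀ t ∈ Set.Icc 0 A, b m t = t)
    (hb_mono : ∀ p < m, ∀ t ∈ Set.Icc 0 A, b p t ≤ b (p + 1) t)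
    (k : ℕ → ℝ × ℝ → ℝ × ℝ → ℝ)
    (hk_cont : ∀ p, ContinuousOn (fun q : (ℝ × ℝ) × (ℝ × ℝ) => k p q.1 q.2)
      ((Set.Icc 0 A ×ˢ Set.Icc 0 A) ×ˢ (Set.Icc 0 A ×ˢ Set.Icc 0 A)))
    (hk_nonneg : ∀ p, ∀ x ∈ Set.Icc 0 A ×ˢ Set.Icc 0 A,
      ∀ w ∈ Set.Icc 0 A ×ˢ Set.Icc 0 A, (0:ℝ) ≤ k p x w)
    (Mk : ℕ → ℝ) (M : ℝ)
    (hMk : ∀ p, ∀ x ∈ Set.Icc 0 A ×ˢ Set.Icc 0 A,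
      ∀ w ∈ Set.Icc 0 A ×ˢ Set.Icc 0 A, k p x w ≤ Mk p)
    (hM : M = ∑ p ∈ Finset.range m, Mk (p + 1))
    (g : ℝ × ℝ → ℝ)
    (φ : ℝ → ℝ) (L : ℝ) (hL : 0 < L)
    (hφ : ∀ x y : ℝ, |φ x - φ y| ≤ L * |x - y|)
    (z : ℕ → ℝ × ℝ → ℝ)
    (hz_cont : ∀ n, ContinuousOn (z n) (Set.Icc 0 A ×ˢ Set.Icc 0 A))
    (hz_rec : ∀ n, ∀ s ∈ Set.Icc 0 A, ∀ t ∈ Set.Icc 0 A,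
      z (n + 1) (s, t) = g (s, t) + ∑ p ∈ Finset.range m,
        ∫ σ in (a p s)..(a (p + 1) s), ∫ τ in (b p t)..(b (p + 1) t),
          k (p + 1) (s, t) (σ, τ) * φ (z n (σ, τ)))
    (Dstar : ℝ)
    (hDstar : Dstar = ⨆ w : (Set.Icc 0 A ×ˢ Set.Icc 0 A : Set (ℝ × ℝ)),
      |z 0 w - z 1 w|) :
    ∀ n : ℕ, ∀ s ∈ Set.Icc 0 A, ∀ t ∈ Set.Icc 0 A,
      |z n (s, t) - z (n + 1) (s, t)| ≤
        (M * L * s * t) ^ n / ((n.factorial : ℝ)) ^ 2 * Dstar := by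
  have hφL : LipschitzWith ⟨L, hL.le⟩ φ :=
    LipschitzWith.of_dist_le_mul fun x y => by rw [Real.dist_eq, Real.dist_eq]; exact hφ x y
  have hD : 0 ≤ Dstar := hDstar ▸ Real.iSup_nonneg fun _ => abs_nonneg _
  intro n
  induction n with
  | zero =>
    intro s hs t ht
    simpa [hDstar] using (isCompact_Icc.prod isCompact_Icc).le_iSup_of_continuousOn
      ((hz_cont 0).sub (hz_cont 1)).abs (x := (s, t)) ⟨hs, ht⟩
  | succ n ih =>
    intro s hs t ht
    have hst : (s, t) ∈ Icc 0 A ×ˢ Icc 0 A := ⟨hs, ht⟩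
    have hM_nonneg : 0 ≤ M :=
      hM ▸ Finset.sum_nonneg fun p _ => (hk_nonneg _ _ hst _ hst).trans (hMk _ _ hst _ hst)
    set c := (M * L) ^ n / (n.factorial : ℝ) ^ 2 * Dstar
    have hc : 0 ≤ c := mul_nonneg (div_nonneg (pow_nonneg (mul_nonneg hM_nonneg hL.le) _)
      (by positivity)) hD
    have ih' : ∀ w ∈ Icc 0 A ×ˢ Icc 0 A, |z n w - z (n + 1) w| ≤ c * w.1 ^ n * w.2 ^ n := by
      rintro ⟨σ, τ⟩ ⟨hσ, hτ⟩
      exact (ih σ hσ τ hτ).trans_eq (by ring)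
    rw [hz_rec n s hs t ht, hz_rec (n + 1) s hs t ht, add_sub_add_left_eq_sub,
      ← Finset.sum_sub_distrib]
    refine (Finset.abs_sum_le_sum_abs _ _).trans ((Finset.sum_le_sum fun p hp => ?_).trans_eq
      (?_ : ∑ p ∈ Finset.range m, Mk (p + 1) * L * c * (s ^ (n + 1) / (n + 1)) *
        (t ^ (n + 1) / (n + 1)) = _))
    · have hp := Finset.mem_range.1 hp
      obtain ⟨ha₀, ha₁⟩ := partition_bounds (u := (a · s)) (ha0 s hs) (ham s hs)
        (fun p hp => ha_mono p hp s hs) hp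
      obtain ⟨hb₀, hb₁⟩ := partition_bounds (u := (b · t)) (hb0 t ht) (hbm t ht)
        (fun p hp => hb_mono p hp t ht) hp
      have hκ : ContinuousOn (k (p + 1) (s, t)) (Icc 0 A ×ˢ Icc 0 A) :=
        (hk_cont (p + 1)).comp (f := fun w => ((s, t), w)) (by fun_prop) fun _ hw => ⟨hst, hw⟩
      exact abs_sub_intervalIntegral_kernel_mul_le (L := ⟨L, hL.le⟩)
        ha₀ (ha_mono p hp s hs) ha₁ hb₀ (hb_mono p hp t ht) hb₁
        (prod_mono (Icc_subset_Icc ha₀ (ha₁.trans hs.2)) (Icc_subset_Icc hb₀ (hb₁.trans ht.2)))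
        hκ (fun w hw => hk_nonneg _ _ hst w hw) (fun w hw => hMk _ _ hst w hw) hφL
        (hz_cont n) (hz_cont (n + 1)) hc ih'
    · simp only [← Finset.sum_mul, ← hM]
      exact picard_coeff_succ M L Dstar s t n

theorem picard_iteration_estimate
    (A : ℝ) (hA : 0 < A) (m : ℕ)
    (a b : ℕ → ℝ → ℝ)
    (ha_cont : ∀ p, ContinuousOn (a p) (Set.Icc 0 A))
    (hb_cont : ∀ p, ContinuousOn (b p) (Set.Icc 0 A))
    (ha0 : ∀ s ∈ Set.Icc 0 A, a 0 s = 0)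
    (ham : ∀ s ∈ Set.Icc 0 A, a m s = s)
    (ha_mono : ∀ p < m, ∀ s ∈ Set.Icc 0 A, a p s ≤ a (p + 1) s)
    (hb0 : ∀ t ∈ Set.Icc 0 A, b 0 t = 0)
    (hbm : ∀ t ∈ Set.Icc 0 A, b m t = t)
    (hb_mono : ∀ p < m, ∀ t ∈ Set.Icc 0 A, b p t ≤ b (p + 1) t)
    (k : ℕ → ℝ × ℝ → ℝ × ℝ → ℝ)
    (hk_cont : ∀ p, ContinuousOn (fun q : (ℝ × ℝ) × (ℝ × ℝ) => k p q.1 q.2)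
      ((Set.Icc 0 A ×ˢ Set.Icc 0 A) ×ˢ (Set.Icc 0 A ×ˢ Set.Icc 0 A)))
    (hk_nonneg : ∀ p, ∀ x ∈ Set.Icc 0 A ×ˢ Set.Icc 0 A,
      ∀ w ∈ Set.Icc 0 A ×ˢ Set.Icc 0 A, (0:ℝ) ≤ k p x w)
    (Mk : ℕ → ℝ) (M : ℝ)
    (hMk : ∀ p, ∀ x ∈ Set.Icc 0 A ×ˢ Set.Icc 0 A,
      ∀ w ∈ Set.Icc 0 A ×ˢ Set.Icc 0 A, k p x w ≤ Mk p)
    (hM : M = ∑ p ∈ Finset.range m, Mk (p + 1))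
    (g : ℝ × ℝ → ℝ) (hg : ContinuousOn g (Set.Icc 0 A ×ˢ Set.Icc 0 A))
    (φ : ℝ → ℝ) (L : ℝ) (hL : 0 < L)
    (hφ : ∀ x y : ℝ, |φ x - φ y| ≤ L * |x - y|)
    (z : ℕ → ℝ × ℝ → ℝ)
    (hz_cont : ∀ n, ContinuousOn (z n) (Set.Icc 0 A ×ˢ Set.Icc 0 A))
    (hz0 : ∀ s ∈ Set.Icc 0 A, ∀ t ∈ Set.Icc 0 A, z 0 (s, t) = g (s, t))
    (hz_rec : ∀ n, ∀ s ∈ Set.Icc 0 A, ∀ t ∈ Set.Icc 0 A,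
      z (n + 1) (s, t) = g (s, t) + ∑ p ∈ Finset.range m,
        ∫ σ in (a p s)..(a (p + 1) s), ∫ τ in (b p t)..(b (p + 1) t),
          k (p + 1) (s, t) (σ, τ) * φ (z n (σ, τ)))
    (Dstar : ℝ)
    (hDstar : Dstar = ⨆ w : (Set.Icc 0 A ×ˢ Set.Icc 0 A : Set (ℝ × ℝ)),
      |z 0 w - z 1 w|) :
    ∀ n : ℕ, ∀ s ∈ Set.Icc 0 A, ∀ t ∈ Set.Icc 0 A,
      |z n (s, t) - z (n + 1) (s, t)| ≤
        (M * L * s * t) ^ n / ((n.factorial : ℝ)) ^ 2 * Dstar :=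
  picard_iteration_estimate_general A m a b ha0 ham ha_mono hb0 hbm hb_mono k hk_cont hk_nonneg Mk M
    hMk hM g φ L hL hφ z hz_cont hz_rec Dstar hDstar
end

section
/- Existence for the nonlinear two-dimensional Volterra integral equation: under the hypotheses below, there exists a continuous function z : Ω → ℝ satisfying z(s,t) = g(s,t) + Σ_{p=1}^{m} ∫_{a_{p-1}(s)}^{a_p(s)} ∫_{b_{p-1}(t)}^{b_p(t)} k_p(s,t,σ,τ) φ(z(σ,τ)) dτ dσ for all (s,t) ∈ Ω. -/
/-!
Extend the data from the square `[0, A]²` to the whole plane by composing with the nearest-point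
retraction onto `[0, A]`; everything becomes globally continuous and bounded, say by `M`. For the
Bielecki weight `w(s, t) = exp (l (s + t))`, the operator turns a difference `|z₁ - z₂| ≤ D w` into
one of at most `M L D w(s, t) / l²`: the rectangles `[a_{p-1}(s), a_p(s)] × [b_{p-1}(t), b_p(t)]`
form a staircase inside `[0, s] × [0, t]`, over which `exp (l (σ + τ))` integrates to at most
`w(s, t) / l²`. Choosing `l² ≥ 2 M L` makes the operator a `1/2`-contraction for the weighted sup
norm, and Banach's fixed point theorem gives the solution.
-/

open Set MeasureTheory

section ParametricIntegral

variable {X E : Type*} [TopologicalSpace X] [NormedAddCommGroup E] [NormedSpace ℝ E]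

theorem continuous_parametric_intervalIntegral_of_continuous_bounds {μ : Measure ℝ}
    [IsLocallyFiniteMeasure μ] [NullSingletonClass μ] {f : X → ℝ → E}
    (hf : Continuous f.uncurry) {u v : X → ℝ} (hu : Continuous u) (hv : Continuous v) :
    Continuous fun x ↦ ∫ t in u x..v x, f x t ∂μ := by
  have hint : ∀ x c d, IntervalIntegrable (f x) μ c d := fun x c d ↦
    (hf.comp (Continuous.prodMk_right x)).intervalIntegrable c d
  have hsplit : ∀ x, ∫ t in u x..v x, f x t ∂μ =
      (∫ t in (0 : ℝ)..v x, f x t ∂μ) - ∫ t in (0 : ℝ)..u x, f x t ∂μ := fun x ↦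
    (intervalIntegral.integral_interval_sub_left (hint x 0 _) (hint x 0 _)).symm
  simp only [hsplit]
  exact (intervalIntegral.continuous_parametric_intervalIntegral_of_continuous hf hv).sub
    (intervalIntegral.continuous_parametric_intervalIntegral_of_continuous hf hu)

theorem intervalIntegral_integral_sub {f₁ f₂ : ℝ → ℝ → E} (h₁ : Continuous f₁.uncurry)
    (h₂ : Continuous f₂.uncurry) (α α' β β' : ℝ) :
    (∫ σ in α..α', ∫ τ in β..β', f₁ σ τ) - ∫ σ in α..α', ∫ τ in β..β', f₂ σ τ =
      ∫ σ in α..α', ∫ τ in β..β', (f₁ σ τ - f₂ σ τ) := by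
  have hinner : ∀ {f : ℝ → ℝ → E}, Continuous f.uncurry → Continuous fun σ ↦ ∫ τ in β..β', f σ τ :=
    fun hf ↦ intervalIntegral.continuous_parametric_intervalIntegral_of_continuous' hf β β'
  rw [← intervalIntegral.integral_sub ((hinner h₁).intervalIntegrable _ _)
    ((hinner h₂).intervalIntegrable _ _)]
  refine intervalIntegral.integral_congr fun σ _ ↦ ?_
  exact (intervalIntegral.integral_sub
    ((h₁.comp (Continuous.prodMk_right σ)).intervalIntegrable _ _)
    ((h₂.comp (Continuous.prodMk_right σ)).intervalIntegrable _ _)).symm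

end ParametricIntegral

theorem abs_integral_integral_le_of_abs_le_mul {f : ℝ → ℝ → ℝ} {u v : ℝ → ℝ}
    (hu : Continuous u) (hv : Continuous v) {α α' β β' : ℝ} (hα : α ≤ α') (hβ : β ≤ β')
    (hf : ∀ σ ∈ Icc α α', ∀ τ ∈ Icc β β', |f σ τ| ≤ u σ * v τ) :
    |∫ σ in α..α', ∫ τ in β..β', f σ τ| ≤ (∫ σ in α..α', u σ) * ∫ τ in β..β', v τ := by
  rw [← intervalIntegral.integral_mul_const, ← Real.norm_eq_abs]
  refine intervalIntegral.norm_integral_le_of_norm_le hα (ae_of_all _ fun σ hσ ↦ ?_)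
    ((hu.mul continuous_const).intervalIntegrable (μ := volume) _ _)
  rw [← intervalIntegral.integral_const_mul]
  exact intervalIntegral.norm_integral_le_of_norm_le hβ
    (ae_of_all _ fun τ hτ ↦ hf σ (Ioc_subset_Icc_self hσ) τ (Ioc_subset_Icc_self hτ))
    ((continuous_const.mul hv).intervalIntegrable (μ := volume) _ _)

theorem integral_exp_const_mul {l : ℝ} (hl : l ≠ 0) (α β : ℝ) :
    ∫ x in α..β, Real.exp (l * x) = (Real.exp (l * β) - Real.exp (l * α)) / l := by
  rw [intervalIntegral.integral_comp_mul_left (fun x ↦ Real.exp x) hl, integral_exp, smul_eq_mul,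
    inv_mul_eq_div]

section Staircase

variable {m : ℕ}

theorem monotoneOn_Iic_of_le_add_one {β : Type*} [Preorder β] {x : ℕ → β}
    (hx : ∀ p < m, x p ≤ x (p + 1)) : MonotoneOn x (Iic m) :=
  monotoneOn_of_le_add_one ordConnected_Iic fun p _ _ hp ↦ hx p hp

theorem MonotoneOn.zero_le_last {x : ℕ → ℝ} (hx : MonotoneOn x (Iic m)) : x 0 ≤ x m :=
  hx (Nat.zero_le m) (le_refl m) (Nat.zero_le m)

theorem MonotoneOn.Icc_subset {x : ℕ → ℝ} (hx : MonotoneOn x (Iic m)) (hx0 : x 0 = 0)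
    {p : ℕ} (hp : p < m) : Icc (x p) (x (p + 1)) ⊆ Icc 0 (x m) :=
  Icc_subset_Icc (hx0 ▸ hx (Nat.zero_le m) hp.le (Nat.zero_le p)) (hx hp (le_refl m) hp)

theorem sum_range_sub_mul_sub_le {x y : ℕ → ℝ} (hx : MonotoneOn x (Iic m))
    (hy : MonotoneOn y (Iic m)) :
    ∑ p ∈ Finset.range m, (x (p + 1) - x p) * (y (p + 1) - y p) ≤ (x m - x 0) * (y m - y 0) := by
  calc ∑ p ∈ Finset.range m, (x (p + 1) - x p) * (y (p + 1) - y p)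
      ≤ ∑ p ∈ Finset.range m, (x (p + 1) - x p) * (y m - y 0) := by
        refine Finset.sum_le_sum fun p hp ↦ ?_
        have hp : p < m := Finset.mem_range.mp hp
        gcongr
        · exact sub_nonneg.2 (hx hp.le hp p.le_succ)
        · exact hy hp (le_refl m) hp
        · exact hy (Nat.zero_le m) hp.le (Nat.zero_le p)
    _ = (x m - x 0) * (y m - y 0) := by rw [← Finset.sum_mul, Finset.sum_range_sub]

theorem sum_abs_integral_integral_le_of_monotoneOn {x y : ℕ → ℝ}
    (hx : MonotoneOn x (Iic m)) (hy : MonotoneOn y (Iic m)) {f : ℕ → ℝ → ℝ → ℝ} {u v : ℝ → ℝ}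
    (hu : Continuous u) (hv : Continuous v) (hu0 : ∀ σ, 0 ≤ u σ) (hv0 : ∀ τ, 0 ≤ v τ)
    (hf : ∀ p < m, ∀ σ ∈ Icc (x p) (x (p + 1)), ∀ τ ∈ Icc (y p) (y (p + 1)),
      |f p σ τ| ≤ u σ * v τ) :
    ∑ p ∈ Finset.range m, |∫ σ in x p..x (p + 1), ∫ τ in y p..y (p + 1), f p σ τ| ≤
      (∫ σ in x 0..x m, u σ) * ∫ τ in y 0..y m, v τ := by
  have hprimitive : ∀ {w : ℝ → ℝ}, Continuous w → ∀ c α β,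
      ∫ r in α..β, w r = (∫ r in c..β, w r) - ∫ r in c..α, w r := fun hw c α β ↦
    (intervalIntegral.integral_interval_sub_left (hw.intervalIntegrable _ _)
      (hw.intervalIntegrable _ _)).symm
  have hmono : ∀ {w : ℝ → ℝ} {z : ℕ → ℝ}, Continuous w → (∀ r, 0 ≤ w r) →
      MonotoneOn z (Iic m) → MonotoneOn (fun p ↦ ∫ r in z 0..z p, w r) (Iic m) :=
    fun hw hw0 hz i hi j hj hij ↦ sub_nonneg.1 <| (hprimitive hw _ _ _).symm ▸
      intervalIntegral.integral_nonneg (hz hi hj hij) fun r _ ↦ hw0 r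
  calc ∑ p ∈ Finset.range m, |∫ σ in x p..x (p + 1), ∫ τ in y p..y (p + 1), f p σ τ|
      ≤ ∑ p ∈ Finset.range m, ((∫ σ in x 0..x (p + 1), u σ) - ∫ σ in x 0..x p, u σ) *
          ((∫ τ in y 0..y (p + 1), v τ) - ∫ τ in y 0..y p, v τ) := by
        refine Finset.sum_le_sum fun p hp ↦ ?_
        have hp : p < m := Finset.mem_range.mp hp
        rw [← hprimitive hu, ← hprimitive hv]
        exact abs_integral_integral_le_of_abs_le_mul hu hv (hx hp.le hp p.le_succ)
          (hy hp.le hp p.le_succ) (hf p hp)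
    _ ≤ _ := sum_range_sub_mul_sub_le (hmono hu hu0 hx) (hmono hv hv0 hy)
    _ = _ := by simp only [intervalIntegral.integral_same, sub_zero]

end Staircase

theorem exists_continuous_fixedPoint_of_weighted_contraction {α : Type*} [TopologicalSpace α]
    {w : α → ℝ} (hw : Continuous w) (hw_pos : ∀ x, 0 < w x)
    {F : (α → ℝ) → α → ℝ} (hF : ∀ z, Continuous z → Continuous (F z))
    {C : ℝ} (hF0 : ∀ x, |F 0 x| ≤ C * w x) {c : NNReal} (hc : c < 1)
    (hF_contr : ∀ z₁ z₂, Continuous z₁ → Continuous z₂ → ∀ D,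
      (∀ x, |z₁ x - z₂ x| ≤ D * w x) → ∀ x, |F z₁ x - F z₂ x| ≤ c * D * w x) :
    ∃ z, Continuous z ∧ F z = z := by
  have hwu : ∀ u : BoundedContinuousFunction α ℝ, Continuous fun x ↦ w x * u x :=
    fun u ↦ hw.mul u.continuous
  have hwu_sub : ∀ u₁ u₂ : BoundedContinuousFunction α ℝ, ∀ x,
      |w x * u₁ x - w x * u₂ x| ≤ dist u₁ u₂ * w x := fun u₁ u₂ x ↦ by
    rw [← mul_sub, abs_mul, abs_of_pos (hw_pos x), mul_comm, ← Real.dist_eq]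
    exact mul_le_mul_of_nonneg_right
      (BoundedContinuousFunction.dist_coe_le_dist (f := u₁) (g := u₂) x) (hw_pos x).le
  -- conjugating `F` by the weight turns the weighted estimate into a sup-norm contraction
  let G (u : BoundedContinuousFunction α ℝ) : α → ℝ := fun x ↦ (w x)⁻¹ * F (fun y ↦ w y * u y) x
  have hG_sub : ∀ u₁ u₂ x, |G u₁ x - G u₂ x| ≤ c * dist u₁ u₂ := fun u₁ u₂ x ↦ by
    have h := hF_contr _ _ (hwu u₁) (hwu u₂) _ (hwu_sub u₁ u₂) x
    rw [← mul_sub, abs_mul, abs_inv, abs_of_pos (hw_pos x), inv_mul_le_iff₀ (hw_pos x)]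
    linarith
  have hG_bdd : ∀ u x, ‖G u x‖ ≤ c * ‖u‖ + C := fun u x ↦ by
    have h := hG_sub u 0 x
    have h0 : |G 0 x| ≤ C := by
      have : G 0 x = (w x)⁻¹ * F 0 x := by
        simp only [G, BoundedContinuousFunction.coe_zero, Pi.zero_apply, mul_zero]; rfl
      rw [this, abs_mul, abs_inv, abs_of_pos (hw_pos x), inv_mul_le_iff₀ (hw_pos x), mul_comm]
      exact hF0 x
    rw [dist_zero_right] at h
    rw [Real.norm_eq_abs]
    linarith [abs_sub_abs_le_abs_sub (G u x) (G 0 x)]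
  let T (u : BoundedContinuousFunction α ℝ) : BoundedContinuousFunction α ℝ :=
    .ofNormedAddCommGroup (G u) ((hw.inv₀ fun x ↦ (hw_pos x).ne').mul (hF _ (hwu u)))
      (c * ‖u‖ + C) (hG_bdd u)
  have hT : ContractingWith c T := ⟨hc, LipschitzWith.of_dist_le_mul fun u₁ u₂ ↦
    (BoundedContinuousFunction.dist_le (by positivity)).2 fun x ↦ hG_sub u₁ u₂ x⟩
  set u := ContractingWith.fixedPoint T hT
  refine ⟨fun x ↦ w x * u x, hwu u, funext fun x ↦ ?_⟩
  have hu : G u x = u x := congrArg (· x) hT.fixedPoint_isFixedPt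
  rw [← hu, ← mul_assoc, mul_inv_cancel₀ (hw_pos x).ne', one_mul]

theorem IsCompact.exists_bound_of_continuousOn_of_finset {ι X : Type*} [TopologicalSpace X]
    {s : Set X} (hs : IsCompact s) (t : Finset ι) {f : ι → X → ℝ}
    (hf : ∀ i, ContinuousOn (f i) s) : ∃ M, ∀ i ∈ t, ∀ x ∈ s, |f i x| ≤ M := by
  choose C hC using fun i ↦ hs.exists_bound_of_continuousOn (hf i)
  obtain ⟨M, hM⟩ := (t.image C).exists_le
  exact ⟨M, fun i hi x hx ↦ (hC i x hx).trans (hM _ (Finset.mem_image_of_mem C hi))⟩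

section Clamp

variable {A : ℝ} (hA : 0 ≤ A)

noncomputable def clampIcc (x : ℝ) : ℝ := projIcc 0 A hA x

noncomputable def clampSq : ℝ × ℝ → ℝ × ℝ := Prod.map (clampIcc hA) (clampIcc hA)

theorem continuous_clampIcc : Continuous (clampIcc hA) :=
  continuous_subtype_val.comp continuous_projIcc

theorem clampIcc_mem (x : ℝ) : clampIcc hA x ∈ Icc 0 A := (projIcc 0 A hA x).2

theorem clampIcc_of_mem {x : ℝ} (hx : x ∈ Icc 0 A) : clampIcc hA x = x :=
  congrArg Subtype.val (projIcc_of_mem hA hx)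

theorem continuous_clampSq : Continuous (clampSq hA) :=
  (continuous_clampIcc hA).prodMap (continuous_clampIcc hA)

theorem clampSq_mem (q : ℝ × ℝ) : clampSq hA q ∈ Icc 0 A ×ˢ Icc 0 A :=
  ⟨clampIcc_mem hA q.1, clampIcc_mem hA q.2⟩

theorem clampSq_of_mem {q : ℝ × ℝ} (hq : q ∈ Icc 0 A ×ˢ Icc 0 A) : clampSq hA q = q :=
  Prod.ext (clampIcc_of_mem hA hq.1) (clampIcc_of_mem hA hq.2)

end Clamp

noncomputable def volterraOp (m : ℕ) (a b : ℕ → ℝ → ℝ) (k : ℕ → ℝ × ℝ → ℝ × ℝ → ℝ)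
    (g : ℝ × ℝ → ℝ) (φ : ℝ → ℝ) (z : ℝ × ℝ → ℝ) (q : ℝ × ℝ) : ℝ :=
  g q + ∑ p ∈ Finset.range m, ∫ σ in a p q.1..a (p + 1) q.1, ∫ τ in b p q.2..b (p + 1) q.2,
    k (p + 1) q (σ, τ) * φ (z (σ, τ))

namespace volterraOp

variable {m : ℕ} {a b : ℕ → ℝ → ℝ} {k : ℕ → ℝ × ℝ → ℝ × ℝ → ℝ} {g : ℝ × ℝ → ℝ} {φ : ℝ → ℝ}

theorem continuous (ha : ∀ p, Continuous (a p)) (hb : ∀ p, Continuous (b p))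
    (hk : ∀ p, Continuous (Function.uncurry (k p))) (hg : Continuous g) (hφ : Continuous φ)
    {z : ℝ × ℝ → ℝ} (hz : Continuous z) : Continuous (volterraOp m a b k g φ z) := by
  refine hg.add (continuous_finsetSum _ fun p _ ↦ ?_)
  have hinner : Continuous fun x : ((ℝ × ℝ) × ℝ) × ℝ ↦
      k (p + 1) x.1.1 (x.1.2, x.2) * φ (z (x.1.2, x.2)) :=
    ((hk (p + 1)).comp (f := fun x : ((ℝ × ℝ) × ℝ) × ℝ ↦ (x.1.1, (x.1.2, x.2))) (by fun_prop)).mul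
      (hφ.comp (hz.comp (f := fun x : ((ℝ × ℝ) × ℝ) × ℝ ↦ (x.1.2, x.2)) (by fun_prop)))
  exact continuous_parametric_intervalIntegral_of_continuous_bounds
    (continuous_parametric_intervalIntegral_of_continuous_bounds hinner
      ((hb p).comp (by fun_prop)) ((hb (p + 1)).comp (by fun_prop)))
    ((ha p).comp continuous_fst) ((ha (p + 1)).comp continuous_fst)

theorem sub_eq {q : ℝ × ℝ} (hk : ∀ p, Continuous (k p q)) (hφ : Continuous φ) {z₁ z₂ : ℝ × ℝ → ℝ}
    (hz₁ : Continuous z₁) (hz₂ : Continuous z₂) :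
    volterraOp m a b k g φ z₁ q - volterraOp m a b k g φ z₂ q =
      ∑ p ∈ Finset.range m, ∫ σ in a p q.1..a (p + 1) q.1, ∫ τ in b p q.2..b (p + 1) q.2,
        k (p + 1) q (σ, τ) * (φ (z₁ (σ, τ)) - φ (z₂ (σ, τ))) := by
  have hcont : ∀ p (z : ℝ × ℝ → ℝ), Continuous z →
      Continuous (Function.uncurry fun σ τ ↦ k (p + 1) q (σ, τ) * φ (z (σ, τ))) :=
    fun p z hz ↦ (hk (p + 1)).mul (hφ.comp hz)
  simp only [volterraOp, add_sub_add_left_eq_sub, ← Finset.sum_sub_distrib, mul_sub]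
  exact Finset.sum_congr rfl fun p _ ↦
    intervalIntegral_integral_sub (hcont p z₁ hz₁) (hcont p z₂ hz₂) _ _ _ _

theorem abs_sub_le_of_abs_sub_le_exp {s t l M D : ℝ} {K : NNReal} (hl : 0 < l) (hM : 0 ≤ M)
    (ha : MonotoneOn (a · s) (Iic m)) (ha0 : a 0 s = 0)
    (hb : MonotoneOn (b · t) (Iic m)) (hb0 : b 0 t = 0)
    (hk : ∀ p, Continuous (k p (s, t))) (hkM : ∀ p < m, ∀ w, |k (p + 1) (s, t) w| ≤ M)
    (hφ : LipschitzWith K φ) {z₁ z₂ : ℝ × ℝ → ℝ} (hz₁ : Continuous z₁) (hz₂ : Continuous z₂)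
    (hD : ∀ σ ∈ Icc 0 (a m s), ∀ τ ∈ Icc 0 (b m t),
      |z₁ (σ, τ) - z₂ (σ, τ)| ≤ D * Real.exp (l * (σ + τ))) :
    |volterraOp m a b k g φ z₁ (s, t) - volterraOp m a b k g φ z₂ (s, t)| ≤
      M * K * D * Real.exp (l * (a m s + b m t)) / l ^ 2 := by
  have hD0 : 0 ≤ D := by
    have h := hD 0 ⟨le_rfl, ha0 ▸ ha.zero_le_last⟩ 0 ⟨le_rfl, hb0 ▸ hb.zero_le_last⟩
    simp only [add_zero, mul_zero, Real.exp_zero, mul_one] at h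
    exact (abs_nonneg _).trans h
  have hstair := sum_abs_integral_integral_le_of_monotoneOn ha hb
    (f := fun p σ τ ↦ k (p + 1) (s, t) (σ, τ) * (φ (z₁ (σ, τ)) - φ (z₂ (σ, τ))))
    (u := fun σ ↦ M * K * D * Real.exp (l * σ)) (v := fun τ ↦ Real.exp (l * τ))
    (by fun_prop) (by fun_prop) (fun σ ↦ by positivity) (fun τ ↦ by positivity)
    fun p hp σ hσ τ hτ ↦ by
      have hLip : |φ (z₁ (σ, τ)) - φ (z₂ (σ, τ))| ≤ K * |z₁ (σ, τ) - z₂ (σ, τ)| := by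
        simpa only [Real.dist_eq] using hφ.dist_le_mul (z₁ (σ, τ)) (z₂ (σ, τ))
      calc |k (p + 1) (s, t) (σ, τ) * (φ (z₁ (σ, τ)) - φ (z₂ (σ, τ)))|
          ≤ M * (K * (D * Real.exp (l * (σ + τ)))) := by
            rw [abs_mul]
            gcongr
            · exact hkM p hp _
            · exact hLip.trans (by
              gcongr; exact hD σ (ha.Icc_subset ha0 hp hσ) τ (hb.Icc_subset hb0 hp hτ))
        _ = M * K * D * Real.exp (l * σ) * Real.exp (l * τ) := by
            rw [mul_add, Real.exp_add]; ring
  rw [intervalIntegral.integral_const_mul, integral_exp_const_mul hl.ne',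
    integral_exp_const_mul hl.ne', ha0, hb0, mul_zero, Real.exp_zero] at hstair
  have hexp_a : 1 ≤ Real.exp (l * a m s) :=
    Real.one_le_exp (mul_nonneg hl.le (ha0 ▸ ha.zero_le_last))
  have hexp_b : 1 ≤ Real.exp (l * b m t) :=
    Real.one_le_exp (mul_nonneg hl.le (hb0 ▸ hb.zero_le_last))
  rw [volterraOp.sub_eq hk hφ.continuous hz₁ hz₂]
  refine (Finset.abs_sum_le_sum_abs _ _).trans (hstair.trans ?_)
  calc _ = M * K * D / l ^ 2 * ((Real.exp (l * a m s) - 1) * (Real.exp (l * b m t) - 1)) := by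
        ring
    _ ≤ M * K * D / l ^ 2 * (Real.exp (l * a m s) * Real.exp (l * b m t)) :=
        mul_le_mul_of_nonneg_left (by nlinarith) (by positivity)
    _ = _ := by rw [mul_add, Real.exp_add]; ring

theorem abs_le {s t M B : ℝ} (hM : 0 ≤ M)
    (ha : MonotoneOn (a · s) (Iic m)) (ha0 : a 0 s = 0)
    (hb : MonotoneOn (b · t) (Iic m)) (hb0 : b 0 t = 0)
    (hkM : ∀ p < m, ∀ w, |k (p + 1) (s, t) w| ≤ M) {z : ℝ × ℝ → ℝ}
    (hB : ∀ σ ∈ Icc 0 (a m s), ∀ τ ∈ Icc 0 (b m t), |φ (z (σ, τ))| ≤ B) :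
    |volterraOp m a b k g φ z (s, t)| ≤ |g (s, t)| + M * B * (a m s * b m t) := by
  have hB0 : 0 ≤ B := (abs_nonneg _).trans
    (hB 0 ⟨le_rfl, ha0 ▸ ha.zero_le_last⟩ 0 ⟨le_rfl, hb0 ▸ hb.zero_le_last⟩)
  have hstair := sum_abs_integral_integral_le_of_monotoneOn ha hb
    (f := fun p σ τ ↦ k (p + 1) (s, t) (σ, τ) * φ (z (σ, τ)))
    (u := fun _ ↦ M * B) (v := fun _ ↦ 1) (by fun_prop) (by fun_prop)
    (fun _ ↦ by positivity) (fun _ ↦ zero_le_one)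
    fun p hp σ hσ τ hτ ↦ by
      rw [abs_mul, mul_one]
      exact mul_le_mul (hkM p hp _) (hB σ (ha.Icc_subset ha0 hp hσ) τ (hb.Icc_subset hb0 hp hτ))
        (abs_nonneg _) hM
  simp only [intervalIntegral.integral_const, ha0, hb0, sub_zero, smul_eq_mul] at hstair
  calc |volterraOp m a b k g φ z (s, t)|
      ≤ |g (s, t)| + ∑ p ∈ Finset.range m, |∫ σ in a p s..a (p + 1) s,
          ∫ τ in b p t..b (p + 1) t, k (p + 1) (s, t) (σ, τ) * φ (z (σ, τ))| :=
        (abs_add_le _ _).trans (by gcongr; exact Finset.abs_sum_le_sum_abs _ _)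
    _ ≤ |g (s, t)| + M * B * (a m s * b m t) := by linarith

theorem congr_of_eqOn {a' b' : ℕ → ℝ → ℝ} {k' : ℕ → ℝ × ℝ → ℝ × ℝ → ℝ} {g' : ℝ × ℝ → ℝ}
    {s t : ℝ} {z : ℝ × ℝ → ℝ} (ha : MonotoneOn (a · s) (Iic m)) (ha0 : a 0 s = 0)
    (hb : MonotoneOn (b · t) (Iic m)) (hb0 : b 0 t = 0)
    (ha' : ∀ p, a' p s = a p s) (hb' : ∀ p, b' p t = b p t) (hg' : g' (s, t) = g (s, t))
    (hk' : ∀ p < m, ∀ σ ∈ Icc 0 (a m s), ∀ τ ∈ Icc 0 (b m t),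
      k' (p + 1) (s, t) (σ, τ) = k (p + 1) (s, t) (σ, τ)) :
    volterraOp m a' b' k' g' φ z (s, t) = volterraOp m a b k g φ z (s, t) := by
  simp only [volterraOp, ha', hb', hg']
  refine congrArg _ (Finset.sum_congr rfl fun p hp ↦ ?_)
  have hp := Finset.mem_range.mp hp
  refine intervalIntegral.integral_congr fun σ hσ ↦ intervalIntegral.integral_congr fun τ hτ ↦ ?_
  rw [uIcc_of_le (ha hp.le hp p.le_succ)] at hσ
  rw [uIcc_of_le (hb hp.le hp p.le_succ)] at hτ
  rw [hk' p hp σ (ha.Icc_subset ha0 hp hσ) τ (hb.Icc_subset hb0 hp hτ)]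

theorem exists_continuous_fixedPoint {A M : ℝ} {K : NNReal} (hA : 0 ≤ A)
    (ha : ∀ p, Continuous (a p)) (hb : ∀ p, Continuous (b p))
    (ha_mono : ∀ s, MonotoneOn (a · s) (Iic m)) (ha0 : ∀ s, a 0 s = 0)
    (ham : ∀ s, a m s = clampIcc hA s)
    (hb_mono : ∀ t, MonotoneOn (b · t) (Iic m)) (hb0 : ∀ t, b 0 t = 0)
    (hbm : ∀ t, b m t = clampIcc hA t)
    (hk : ∀ p, Continuous (Function.uncurry (k p))) (hkM : ∀ p < m, ∀ x w, |k (p + 1) x w| ≤ M)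
    (hg : Continuous g) (hgM : ∀ q, |g q| ≤ M) (hφ : LipschitzWith K φ) :
    ∃ z, Continuous z ∧ volterraOp m a b k g φ z = z := by
  have hM : 0 ≤ M := (abs_nonneg _).trans (hgM 0)
  set l := max 1 (2 * M * K)
  have hl : 0 < l := zero_lt_one.trans_le (le_max_left _ _)
  have hl2 : M * K / l ^ 2 ≤ 1 / 2 := by
    rw [div_le_iff₀ (by positivity)]
    nlinarith [le_max_left 1 (2 * M * K), le_max_right 1 (2 * M * K)]
  set w : ℝ × ℝ → ℝ := fun q ↦ Real.exp (l * (a m q.1 + b m q.2))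
  have ham_mem : ∀ s, a m s ∈ Icc 0 A := fun s ↦ ham s ▸ clampIcc_mem hA s
  have hbm_mem : ∀ t, b m t ∈ Icc 0 A := fun t ↦ hbm t ▸ clampIcc_mem hA t
  have hw_one : ∀ q, 1 ≤ w q := fun q ↦ Real.one_le_exp <| mul_nonneg hl.le <|
    add_nonneg (ham_mem q.1).1 (hbm_mem q.2).1
  have hw_box : ∀ s t, ∀ σ ∈ Icc 0 (a m s), ∀ τ ∈ Icc 0 (b m t),
      w (σ, τ) = Real.exp (l * (σ + τ)) := fun s t σ hσ τ hτ ↦ by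
    simp only [w, ham, hbm, clampIcc_of_mem hA ⟨hσ.1, hσ.2.trans (ham_mem s).2⟩,
      clampIcc_of_mem hA ⟨hτ.1, hτ.2.trans (hbm_mem t).2⟩]
  refine exists_continuous_fixedPoint_of_weighted_contraction (w := w) (c := 1 / 2)
    (C := M + M * |φ 0| * (A * A)) (by fun_prop) (fun q ↦ Real.exp_pos _)
    (fun z hz ↦ volterraOp.continuous ha hb hk hg hφ.continuous hz) ?_ (by norm_num) ?_
  · intro q
    have h := volterraOp.abs_le (g := g) hM (ha_mono q.1) (ha0 _) (hb_mono q.2) (hb0 _)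
      (fun p hp ↦ hkM p hp q) (z := 0) (B := |φ 0|) (fun _ _ _ _ ↦ le_rfl)
    have hA2 : a m q.1 * b m q.2 ≤ A * A :=
      mul_le_mul (ham_mem _).2 (hbm_mem _).2 (hbm_mem _).1 hA
    calc _ ≤ |g q| + M * |φ 0| * (a m q.1 * b m q.2) := h
      _ ≤ M + M * |φ 0| * (A * A) := by gcongr; exact hgM q
      _ ≤ _ := le_mul_of_one_le_right (by positivity) (hw_one q)
  · rintro z₁ z₂ hz₁ hz₂ D hD ⟨s, t⟩
    have h := volterraOp.abs_sub_le_of_abs_sub_le_exp (g := g) hl hM (ha_mono s) (ha0 s)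
      (hb_mono t) (hb0 t) (fun p ↦ (hk p).comp (Continuous.prodMk_right (s, t)))
      (fun p hp ↦ hkM p hp (s, t)) hφ hz₁ hz₂ fun σ hσ τ hτ ↦ hw_box s t σ hσ τ hτ ▸ hD (σ, τ)
    have hD0 : 0 ≤ D :=
      nonneg_of_mul_nonneg_left ((abs_nonneg _).trans (hD (s, t))) (Real.exp_pos _)
    calc _ ≤ M * K / l ^ 2 * D * w (s, t) := h.trans_eq (by ring)
      _ ≤ 1 / 2 * D * w (s, t) := by gcongr
      _ = _ := by norm_num

end volterraOp

theorem volterra_2d_piecewise_existence_general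
    (A : ℝ) (hA : 0 < A) (m : ℕ)
    (a b : ℕ → ℝ → ℝ)
    (ha_cont : ∀ p, ContinuousOn (a p) (Set.Icc 0 A))
    (hb_cont : ∀ p, ContinuousOn (b p) (Set.Icc 0 A))
    (ha0 : ∀ s ∈ Set.Icc 0 A, a 0 s = 0)
    (ham : ∀ s ∈ Set.Icc 0 A, a m s = s)
    (ha_mono : ∀ p < m, ∀ s ∈ Set.Icc 0 A, a p s ≤ a (p + 1) s)
    (hb0 : ∀ t ∈ Set.Icc 0 A, b 0 t = 0)
    (hbm : ∀ t ∈ Set.Icc 0 A, b m t = t)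
    (hb_mono : ∀ p < m, ∀ t ∈ Set.Icc 0 A, b p t ≤ b (p + 1) t)
    (k : ℕ → ℝ × ℝ → ℝ × ℝ → ℝ)
    (hk_cont : ∀ p, ContinuousOn (fun q : (ℝ × ℝ) × (ℝ × ℝ) => k p q.1 q.2)
      ((Set.Icc 0 A ×ˢ Set.Icc 0 A) ×ˢ (Set.Icc 0 A ×ˢ Set.Icc 0 A)))
    (g : ℝ × ℝ → ℝ) (hg : ContinuousOn g (Set.Icc 0 A ×ˢ Set.Icc 0 A))
    (φ : ℝ → ℝ) (L : ℝ)
    (hφ : ∀ x y : ℝ, |φ x - φ y| ≤ L * |x - y|) :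
    ∃ z : ℝ × ℝ → ℝ, ContinuousOn z (Set.Icc 0 A ×ˢ Set.Icc 0 A) ∧
      ∀ s ∈ Set.Icc 0 A, ∀ t ∈ Set.Icc 0 A,
        z (s, t) = g (s, t) + ∑ p ∈ Finset.range m,
          ∫ σ in (a p s)..(a (p + 1) s), ∫ τ in (b p t)..(b (p + 1) t),
            k (p + 1) (s, t) (σ, τ) * φ (z (σ, τ)) := by
  have ha_mono' := fun s hs ↦ monotoneOn_Iic_of_le_add_one fun p hp ↦ ha_mono p hp s hs
  have hb_mono' := fun t ht ↦ monotoneOn_Iic_of_le_add_one fun p hp ↦ hb_mono p hp t ht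
  have hsq : IsCompact (Icc 0 A ×ˢ Icc 0 A) := isCompact_Icc.prod isCompact_Icc
  obtain ⟨Mk, hMk⟩ := (hsq.prod hsq).exists_bound_of_continuousOn_of_finset (Finset.range m)
    (f := fun p q ↦ k (p + 1) q.1 q.2) fun p ↦ hk_cont (p + 1)
  obtain ⟨Mg, hMg⟩ := hsq.exists_bound_of_continuousOn hg
  obtain ⟨z, hz, hVz⟩ := volterraOp.exists_continuous_fixedPoint hA.le (M := max Mk Mg)
    (a := fun p s ↦ a p (clampIcc hA.le s)) (b := fun p t ↦ b p (clampIcc hA.le t))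
    (k := fun p x w ↦ k p (clampSq hA.le x) (clampSq hA.le w)) (g := g ∘ clampSq hA.le)
    (fun p ↦ (ha_cont p).comp_continuous (continuous_clampIcc _) (clampIcc_mem _))
    (fun p ↦ (hb_cont p).comp_continuous (continuous_clampIcc _) (clampIcc_mem _))
    (fun s ↦ ha_mono' _ (clampIcc_mem _ s)) (fun s ↦ ha0 _ (clampIcc_mem _ s))
    (fun s ↦ ham _ (clampIcc_mem _ s))
    (fun t ↦ hb_mono' _ (clampIcc_mem _ t)) (fun t ↦ hb0 _ (clampIcc_mem _ t))
    (fun t ↦ hbm _ (clampIcc_mem _ t))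
    (fun p ↦ (hk_cont p).comp_continuous ((continuous_clampSq _).prodMap (continuous_clampSq _))
      fun q ↦ ⟨clampSq_mem _ q.1, clampSq_mem _ q.2⟩)
    (fun p hp x w ↦ (hMk p (Finset.mem_range.2 hp) (clampSq hA.le x, clampSq hA.le w)
      ⟨clampSq_mem _ x, clampSq_mem _ w⟩).trans (le_max_left _ _))
    (hg.comp_continuous (continuous_clampSq _) (clampSq_mem _))
    (fun q ↦ (hMg (clampSq hA.le q) (clampSq_mem _ q)).trans (le_max_right _ _))
    (LipschitzWith.of_dist_le' hφ)
  refine ⟨z, hz.continuousOn, fun s hs t ht ↦ ?_⟩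
  rw [← congrFun hVz (s, t)]
  refine volterraOp.congr_of_eqOn (ha_mono' s hs) (ha0 s hs) (hb_mono' t ht) (hb0 t ht)
    (fun p ↦ congrArg (a p) (clampIcc_of_mem _ hs)) (fun p ↦ congrArg (b p) (clampIcc_of_mem _ ht))
    (congrArg g (clampSq_of_mem _ ⟨hs, ht⟩)) fun p _ σ hσ τ hτ ↦ ?_
  rw [clampSq_of_mem _ ⟨hs, ht⟩, clampSq_of_mem _ ⟨⟨hσ.1, (hσ.2.trans_eq (ham s hs)).trans hs.2⟩,
    ⟨hτ.1, (hτ.2.trans_eq (hbm t ht)).trans ht.2⟩⟩]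

theorem volterra_2d_piecewise_existence
    (A : ℝ) (hA : 0 < A) (m : ℕ)
    (a b : ℕ → ℝ → ℝ)
    (ha_cont : ∀ p, ContinuousOn (a p) (Set.Icc 0 A))
    (hb_cont : ∀ p, ContinuousOn (b p) (Set.Icc 0 A))
    (ha_maps : ∀ p, ∀ s ∈ Set.Icc 0 A, a p s ∈ Set.Icc 0 A)
    (hb_maps : ∀ p, ∀ t ∈ Set.Icc 0 A, b p t ∈ Set.Icc 0 A)
    (ha0 : ∀ s ∈ Set.Icc 0 A, a 0 s = 0)
    (ham : ∀ s ∈ Set.Icc 0 A, a m s = s)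
    (ha_mono : ∀ p < m, ∀ s ∈ Set.Icc 0 A, a p s ≤ a (p + 1) s)
    (hb0 : ∀ t ∈ Set.Icc 0 A, b 0 t = 0)
    (hbm : ∀ t ∈ Set.Icc 0 A, b m t = t)
    (hb_mono : ∀ p < m, ∀ t ∈ Set.Icc 0 A, b p t ≤ b (p + 1) t)
    (k : ℕ → ℝ × ℝ → ℝ × ℝ → ℝ)
    (hk_cont : ∀ p, ContinuousOn (fun q : (ℝ × ℝ) × (ℝ × ℝ) => k p q.1 q.2)
      ((Set.Icc 0 A ×ˢ Set.Icc 0 A) ×ˢ (Set.Icc 0 A ×ˢ Set.Icc 0 A)))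
    (hk_nonneg : ∀ p, ∀ x ∈ Set.Icc 0 A ×ˢ Set.Icc 0 A,
      ∀ w ∈ Set.Icc 0 A ×ˢ Set.Icc 0 A, (0:ℝ) ≤ k p x w)
    (g : ℝ × ℝ → ℝ) (hg : ContinuousOn g (Set.Icc 0 A ×ˢ Set.Icc 0 A))
    (φ : ℝ → ℝ) (L : ℝ) (hL : 0 < L)
    (hφ : ∀ x y : ℝ, |φ x - φ y| ≤ L * |x - y|) :
    ∃ z : ℝ × ℝ → ℝ, ContinuousOn z (Set.Icc 0 A ×ˢ Set.Icc 0 A) ∧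
      ∀ s ∈ Set.Icc 0 A, ∀ t ∈ Set.Icc 0 A,
        z (s, t) = g (s, t) + ∑ p ∈ Finset.range m,
          ∫ σ in (a p s)..(a (p + 1) s), ∫ τ in (b p t)..(b (p + 1) t),
            k (p + 1) (s, t) (σ, τ) * φ (z (σ, τ)) :=
  volterra_2d_piecewise_existence_general A hA m a b ha_cont hb_cont ha0 ham ha_mono hb0 hbm hb_mono
    k hk_cont g hg φ L hφ
end

section
/- Existence and uniqueness for the linear two-dimensional Volterra integral equation with piecewise kernel: under the hypotheses below, there is a unique continuous z : Ω → ℝ with z(s,t) = g(s,t) + Σ_{p=1}^{m} ∫_{a_{p-1}(s)}^{a_p(s)} ∫_{b_{p-1}(t)}^{b_p(t)} k_p(s,t,σ,τ) z(σ,τ) dτ dσ for all (s,t) ∈ Ω. -/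
open MeasureTheory Set BoundedContinuousFunction
open scoped Nat

noncomputable def vcl (A x : ℝ) : ℝ := min A (max x 0)

@[fun_prop]
lemma vcl_cont (A : ℝ) : Continuous (vcl A) := by unfold vcl; fun_prop

lemma vcl_mem (A : ℝ) (hA : 0 ≤ A) (x : ℝ) : vcl A x ∈ Icc 0 A :=
  ⟨le_min hA (le_max_right _ _), min_le_left _ _⟩

lemma vcl_eq (A : ℝ) {x : ℝ} (hx : x ∈ Icc 0 A) : vcl A x = x := by
  unfold vcl; rw [max_eq_left hx.1, min_eq_right hx.2]

lemma vcl_idem (A : ℝ) (hA : 0 ≤ A) (x : ℝ) : vcl A (vcl A x) = vcl A x :=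
  vcl_eq A (vcl_mem A hA x)

lemma cont_param_int {X : Type*} [TopologicalSpace X] [LocallyCompactSpace X]
    {F : X → ℝ → ℝ} (hF : Continuous (Function.uncurry F))
    {u v : X → ℝ} (hu : Continuous u) (hv : Continuous v) :
    Continuous fun x => ∫ t in u x..v x, F x t := by
  have h1 : Continuous fun x => ∫ t in (0:ℝ)..v x, F x t :=
    intervalIntegral.continuous_parametric_intervalIntegral_of_continuous hF hv
  have h2 : Continuous fun x => ∫ t in (0:ℝ)..u x, F x t :=
    intervalIntegral.continuous_parametric_intervalIntegral_of_continuous hF hu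
  have : (fun x => ∫ t in u x..v x, F x t)
      = fun x => (∫ t in (0:ℝ)..v x, F x t) - ∫ t in (0:ℝ)..u x, F x t := by
    funext x
    rw [intervalIntegral.integral_interval_sub_left]
    · exact (hF.comp (by fun_prop : Continuous fun t : ℝ => (x, t))).intervalIntegrable _ _
    · exact (hF.comp (by fun_prop : Continuous fun t : ℝ => (x, t))).intervalIntegrable _ _
  rw [this]; exact h1.sub h2

noncomputable def volT (A : ℝ) (m : ℕ) (a b : ℕ → ℝ → ℝ) (k : ℕ → ℝ × ℝ → ℝ × ℝ → ℝ)
    (g : ℝ × ℝ → ℝ) (z : ℝ × ℝ → ℝ) : ℝ × ℝ → ℝ := fun x =>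
  g (vcl A x.1, vcl A x.2) + ∑ p ∈ Finset.range m,
    ∫ σ in a p (vcl A x.1)..a (p+1) (vcl A x.1),
      ∫ τ in b p (vcl A x.2)..b (p+1) (vcl A x.2),
        k (p+1) (vcl A x.1, vcl A x.2) (vcl A σ, vcl A τ) * z (σ, τ)

section
variable {A : ℝ} {m : ℕ} {a b : ℕ → ℝ → ℝ} {k : ℕ → ℝ × ℝ → ℝ × ℝ → ℝ} {g : ℝ × ℝ → ℝ}

lemma volT_cont (hA : 0 ≤ A)
    (ha_cont : ∀ p, ContinuousOn (a p) (Set.Icc 0 A))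
    (hb_cont : ∀ p, ContinuousOn (b p) (Set.Icc 0 A))
    (hk_cont : ∀ p, ContinuousOn (fun q : (ℝ × ℝ) × (ℝ × ℝ) => k p q.1 q.2)
      ((Set.Icc 0 A ×ˢ Set.Icc 0 A) ×ˢ (Set.Icc 0 A ×ˢ Set.Icc 0 A)))
    (hg : ContinuousOn g (Set.Icc 0 A ×ˢ Set.Icc 0 A))
    {z : ℝ × ℝ → ℝ} (hz : Continuous z) :
    Continuous (volT A m a b k g z) := by
  have hgc : Continuous fun x : ℝ × ℝ => g (vcl A x.1, vcl A x.2) :=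
    hg.comp_continuous (by fun_prop)
      (fun x => mk_mem_prod (vcl_mem A hA _) (vcl_mem A hA _))
  have hkc : ∀ p, Continuous fun q : (ℝ × ℝ) × (ℝ × ℝ) =>
      k p (vcl A q.1.1, vcl A q.1.2) (vcl A q.2.1, vcl A q.2.2) := by
    intro p
    exact (hk_cont p).comp_continuous (by fun_prop)
      (fun q => mk_mem_prod (mk_mem_prod (vcl_mem A hA _) (vcl_mem A hA _))
        (mk_mem_prod (vcl_mem A hA _) (vcl_mem A hA _)))
  have hac : ∀ p, Continuous fun s => a p (vcl A s) := fun p =>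
    (ha_cont p).comp_continuous (vcl_cont A) (vcl_mem A hA)
  have hbc : ∀ p, Continuous fun t => b p (vcl A t) := fun p =>
    (hb_cont p).comp_continuous (vcl_cont A) (vcl_mem A hA)
  apply hgc.add
  apply continuous_finset_sum
  intro p _
  apply cont_param_int (X := ℝ × ℝ)
    (F := fun x σ => ∫ τ in b p (vcl A x.2)..b (p+1) (vcl A x.2),
        k (p+1) (vcl A x.1, vcl A x.2) (vcl A σ, vcl A τ) * z (σ, τ))
  · apply cont_param_int (X := (ℝ × ℝ) × ℝ)
      (F := fun q τ => k (p+1) (vcl A q.1.1, vcl A q.1.2) (vcl A q.2, vcl A τ) * z (q.2, τ))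
    · apply Continuous.mul
      · exact (hkc (p+1)).comp
          (show Continuous fun r : ((ℝ × ℝ) × ℝ) × ℝ =>
            ((r.1.1.1, r.1.1.2), (r.1.2, r.2)) by fun_prop)
      · exact hz.comp (show Continuous fun r : ((ℝ × ℝ) × ℝ) × ℝ => (r.1.2, r.2) by fun_prop)
    · exact (hbc p).comp (by fun_prop)
    · exact (hbc (p+1)).comp (by fun_prop)
  · exact (hac p).comp continuous_fst
  · exact (hac (p+1)).comp continuous_fst

lemma volT_eq_on (hA : 0 ≤ A)
    (ha_maps : ∀ p, ∀ s ∈ Set.Icc 0 A, a p s ∈ Set.Icc 0 A)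
    (hb_maps : ∀ p, ∀ t ∈ Set.Icc 0 A, b p t ∈ Set.Icc 0 A)
    {z : ℝ × ℝ → ℝ} {s t : ℝ} (hs : s ∈ Icc 0 A) (ht : t ∈ Icc 0 A) :
    volT A m a b k g z (s, t) = g (s, t) + ∑ p ∈ Finset.range m,
      ∫ σ in (a p s)..(a (p + 1) s), ∫ τ in (b p t)..(b (p + 1) t),
        k (p + 1) (s, t) (σ, τ) * z (σ, τ) := by
  have hIcc : Icc (0:ℝ) A = uIcc 0 A := (uIcc_of_le hA).symm
  simp only [volT, vcl_eq A hs, vcl_eq A ht]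
  congr 1
  apply Finset.sum_congr rfl
  intro p _
  apply intervalIntegral.integral_congr
  intro σ hσ
  have hσ' : σ ∈ Icc 0 A := by
    rw [hIcc]
    exact uIcc_subset_uIcc (by rw [← hIcc]; exact ha_maps p s hs)
      (by rw [← hIcc]; exact ha_maps (p+1) s hs) hσ
  apply intervalIntegral.integral_congr
  intro τ hτ
  have hτ' : τ ∈ Icc 0 A := by
    rw [hIcc]
    exact uIcc_subset_uIcc (by rw [← hIcc]; exact hb_maps p t ht)
      (by rw [← hIcc]; exact hb_maps (p+1) t ht) hτ
  dsimp only
  rw [vcl_eq A hσ', vcl_eq A hτ']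

lemma volT_clamp (hA : 0 ≤ A) (z : ℝ × ℝ → ℝ) (x : ℝ × ℝ) :
    volT A m a b k g z x = volT A m a b k g z (vcl A x.1, vcl A x.2) := by
  simp only [volT, vcl_idem A hA]



lemma int_pow_le (n : ℕ) {u v w : ℝ} (h0 : 0 ≤ u) (huv : u ≤ v) (hvw : v ≤ w) :
    ∫ x in u..v, x ^ n ≤ w ^ (n+1) / ((n:ℝ)+1) := by
  rw [integral_pow]
  have h1 : (0:ℝ) ≤ u ^ (n+1) := pow_nonneg h0 _
  have h2 : v ^ (n+1) ≤ w ^ (n+1) := pow_le_pow_left₀ (h0.trans huv) hvw _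
  have h3 : (0:ℝ) < (n:ℝ)+1 := by positivity
  gcongr
  linarith

lemma chain_bounds (hm0 : ∀ s ∈ Icc 0 A, a 0 s = 0) (hmm : ∀ s ∈ Icc 0 A, a m s = s)
    (hmono : ∀ p < m, ∀ s ∈ Icc 0 A, a p s ≤ a (p + 1) s) :
    ∀ p ≤ m, ∀ s ∈ Icc 0 A, a p s ∈ Icc 0 s := by
  have mono : ∀ s ∈ Icc 0 A, ∀ q r : ℕ, q ≤ r → r ≤ m → a q s ≤ a r s := by
    intro s hs q r hqr
    induction hqr with
    | refl => intro _; exact le_rfl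
    | @step r' hqr' ih =>
      intro hr'm
      exact (ih (le_of_lt hr'm)).trans (hmono r' hr'm s hs)
  intro p hp s hs
  constructor
  · have := mono s hs 0 p (Nat.zero_le p) hp
    rwa [hm0 s hs] at this
  · have := mono s hs p m hp le_rfl
    rwa [hmm s hs] at this


end
section
variable {A : ℝ} {m : ℕ} {a b : ℕ → ℝ → ℝ} {k : ℕ → ℝ × ℝ → ℝ × ℝ → ℝ} {g : ℝ × ℝ → ℝ}

lemma volT_step (hA : 0 ≤ A) {M : ℝ} (hM0 : 0 ≤ M)
    (hk_cont : ∀ p, ContinuousOn (fun q : (ℝ × ℝ) × (ℝ × ℝ) => k p q.1 q.2)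
      ((Icc 0 A ×ˢ Icc 0 A) ×ˢ (Icc 0 A ×ˢ Icc 0 A)))
    (haI : ∀ p ≤ m, ∀ s ∈ Icc 0 A, a p s ∈ Icc 0 s)
    (hbI : ∀ p ≤ m, ∀ t ∈ Icc 0 A, b p t ∈ Icc 0 t)
    (ha_mono : ∀ p < m, ∀ s ∈ Icc 0 A, a p s ≤ a (p + 1) s)
    (hb_mono : ∀ p < m, ∀ t ∈ Icc 0 A, b p t ≤ b (p + 1) t)
    (hkM : ∀ p < m, ∀ x ∈ Icc 0 A ×ˢ Icc 0 A, ∀ w ∈ Icc 0 A ×ˢ Icc 0 A, |k (p+1) x w| ≤ M)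
    {z v : ℝ × ℝ → ℝ} (hz : Continuous z) (hv : Continuous v)
    {C : ℝ} (hC : 0 ≤ C) {n : ℕ}
    (hd : ∀ σ ∈ Icc 0 A, ∀ τ ∈ Icc 0 A, |z (σ, τ) - v (σ, τ)| ≤ C * (σ ^ n * τ ^ n)) :
    ∀ s ∈ Icc 0 A, ∀ t ∈ Icc 0 A,
      |volT A m a b k g z (s, t) - volT A m a b k g v (s, t)|
        ≤ (m : ℝ) * M * C * (s ^ (n+1) * t ^ (n+1)) / (((n:ℝ)+1) * ((n:ℝ)+1)) := by
  intro s hs t ht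
  have hs0 : 0 ≤ s := hs.1
  have ht0 : 0 ≤ t := ht.1
  simp only [volT, vcl_eq A hs, vcl_eq A ht, add_sub_add_left_eq_sub,
    ← Finset.sum_sub_distrib]
  calc |∑ p ∈ Finset.range m,
        ((∫ σ in a p s..a (p+1) s, ∫ τ in b p t..b (p+1) t,
            k (p+1) (s, t) (vcl A σ, vcl A τ) * z (σ, τ)) -
         ∫ σ in a p s..a (p+1) s, ∫ τ in b p t..b (p+1) t,
            k (p+1) (s, t) (vcl A σ, vcl A τ) * v (σ, τ))|
      ≤ ∑ p ∈ Finset.range m,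
        |(∫ σ in a p s..a (p+1) s, ∫ τ in b p t..b (p+1) t,
            k (p+1) (s, t) (vcl A σ, vcl A τ) * z (σ, τ)) -
         ∫ σ in a p s..a (p+1) s, ∫ τ in b p t..b (p+1) t,
            k (p+1) (s, t) (vcl A σ, vcl A τ) * v (σ, τ)| :=
        Finset.abs_sum_le_sum_abs _ _
    _ ≤ ∑ _p ∈ Finset.range m,
          M * C * (s ^ (n+1) * t ^ (n+1)) / (((n:ℝ)+1) * ((n:ℝ)+1)) := by
        apply Finset.sum_le_sum
        intro p hp
        have hpm : p < m := Finset.mem_range.mp hp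
        set α := a p s with hα
        set β := a (p+1) s with hβ
        set γ := b p t with hγ
        set δ := b (p+1) t with hδ
        have hα0 : 0 ≤ α := (haI p hpm.le s hs).1
        have hαβ : α ≤ β := ha_mono p hpm s hs
        have hβs : β ≤ s := (haI (p+1) hpm s hs).2
        have hγ0 : 0 ≤ γ := (hbI p hpm.le t ht).1
        have hγδ : γ ≤ δ := hb_mono p hpm t ht
        have hδt : δ ≤ t := (hbI (p+1) hpm t ht).2
        set K' : ℝ → ℝ → ℝ := fun σ τ => k (p+1) (s, t) (vcl A σ, vcl A τ) with hK'
        have hK'c : Continuous fun r : ℝ × ℝ => K' r.1 r.2 := by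
          apply (hk_cont (p+1)).comp_continuous (f := fun r : ℝ × ℝ =>
            (((s, t) : ℝ × ℝ), (vcl A r.1, vcl A r.2)))
          · fun_prop
          · intro r
            exact mk_mem_prod (mk_mem_prod hs ht)
              (mk_mem_prod (vcl_mem A hA _) (vcl_mem A hA _))
        have hK'M : ∀ σ τ : ℝ, |K' σ τ| ≤ M := fun σ τ =>
          hkM p hpm _ (mk_mem_prod hs ht) _
            (mk_mem_prod (vcl_mem A hA _) (vcl_mem A hA _))
        -- inner integrals are continuous in σ
        have hinz : ∀ w : ℝ × ℝ → ℝ, Continuous w →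
            Continuous fun σ => ∫ τ in γ..δ, K' σ τ * w (σ, τ) := by
          intro w hw
          apply cont_param_int (u := fun _ => γ) (v := fun _ => δ)
          · exact (hK'c.mul (hw.comp continuous_id)).comp continuous_id
          · exact continuous_const
          · exact continuous_const
        have hIzc := hinz z hz
        have hIvc := hinz v hv
        have hIτ : ∀ (w : ℝ × ℝ → ℝ), Continuous w → ∀ σ : ℝ,
            IntervalIntegrable (fun τ => K' σ τ * w (σ, τ)) volume γ δ := by
          intro w hw σ
          apply Continuous.intervalIntegrable
          have : Continuous fun τ : ℝ => ((σ, τ) : ℝ × ℝ) := by fun_prop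
          exact (hK'c.comp this).mul (hw.comp this)
        -- pointwise bound on the inner difference
        have hpt : ∀ σ ∈ Icc α β,
            |(∫ τ in γ..δ, K' σ τ * z (σ, τ)) - ∫ τ in γ..δ, K' σ τ * v (σ, τ)|
              ≤ (M * C * (t ^ (n+1) / ((n:ℝ)+1))) * σ ^ n := by
          intro σ hσ
          have hσA : σ ∈ Icc 0 A := ⟨hα0.trans hσ.1, hσ.2.trans (hβs.trans hs.2)⟩
          have hσ0 : 0 ≤ σ := hσA.1
          have hdiff : (∫ τ in γ..δ, K' σ τ * z (σ, τ)) - ∫ τ in γ..δ, K' σ τ * v (σ, τ)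
              = ∫ τ in γ..δ, K' σ τ * (z (σ, τ) - v (σ, τ)) := by
            rw [← intervalIntegral.integral_sub (hIτ z hz σ) (hIτ v hv σ)]
            apply intervalIntegral.integral_congr
            intro τ _
            ring
          rw [hdiff]
          have habs : Continuous fun τ : ℝ => |K' σ τ * (z (σ, τ) - v (σ, τ))| := by
            have : Continuous fun τ : ℝ => ((σ, τ) : ℝ × ℝ) := by fun_prop
            exact ((hK'c.comp this).mul ((hz.comp this).sub (hv.comp this))).abs
          calc |∫ τ in γ..δ, K' σ τ * (z (σ, τ) - v (σ, τ))|
              ≤ ∫ τ in γ..δ, |K' σ τ * (z (σ, τ) - v (σ, τ))| :=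
                intervalIntegral.abs_integral_le_integral_abs hγδ
            _ ≤ ∫ τ in γ..δ, (M * C * σ ^ n) * τ ^ n := by
                apply intervalIntegral.integral_mono_on hγδ
                  (habs.intervalIntegrable _ _)
                  ((by fun_prop : Continuous fun τ : ℝ => (M * C * σ ^ n) * τ ^ n).intervalIntegrable _ _)
                intro τ hτ
                have hτA : τ ∈ Icc 0 A := ⟨hγ0.trans hτ.1, hτ.2.trans (hδt.trans ht.2)⟩
                rw [abs_mul]
                calc |K' σ τ| * |z (σ, τ) - v (σ, τ)|
                    ≤ M * (C * (σ ^ n * τ ^ n)) :=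
                      mul_le_mul (hK'M σ τ) (hd σ hσA τ hτA)
                        (abs_nonneg _) hM0
                  _ = (M * C * σ ^ n) * τ ^ n := by ring
            _ = (M * C * σ ^ n) * ∫ τ in γ..δ, τ ^ n := by
                rw [intervalIntegral.integral_const_mul]
            _ ≤ (M * C * σ ^ n) * (t ^ (n+1) / ((n:ℝ)+1)) := by
                apply mul_le_mul_of_nonneg_left (int_pow_le n hγ0 hγδ hδt)
                positivity
            _ = (M * C * (t ^ (n+1) / ((n:ℝ)+1))) * σ ^ n := by ring
        -- now the outer integral
        have houter : (∫ σ in α..β, ∫ τ in γ..δ, K' σ τ * z (σ, τ)) -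
            (∫ σ in α..β, ∫ τ in γ..δ, K' σ τ * v (σ, τ))
            = ∫ σ in α..β, ((∫ τ in γ..δ, K' σ τ * z (σ, τ)) -
                ∫ τ in γ..δ, K' σ τ * v (σ, τ)) := by
          rw [← intervalIntegral.integral_sub (hIzc.intervalIntegrable _ _)
            (hIvc.intervalIntegrable _ _)]
        rw [houter]
        calc |∫ σ in α..β, ((∫ τ in γ..δ, K' σ τ * z (σ, τ)) -
                ∫ τ in γ..δ, K' σ τ * v (σ, τ))|
            ≤ ∫ σ in α..β, |(∫ τ in γ..δ, K' σ τ * z (σ, τ)) -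
                ∫ τ in γ..δ, K' σ τ * v (σ, τ)| :=
              intervalIntegral.abs_integral_le_integral_abs hαβ
          _ ≤ ∫ σ in α..β, (M * C * (t ^ (n+1) / ((n:ℝ)+1))) * σ ^ n := by
              apply intervalIntegral.integral_mono_on hαβ
                ((hIzc.sub hIvc).abs.intervalIntegrable _ _)
                ((by fun_prop : Continuous fun σ : ℝ =>
                  (M * C * (t ^ (n+1) / ((n:ℝ)+1))) * σ ^ n).intervalIntegrable _ _)
              exact hpt
          _ = (M * C * (t ^ (n+1) / ((n:ℝ)+1))) * ∫ σ in α..β, σ ^ n := by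
              rw [intervalIntegral.integral_const_mul]
          _ ≤ (M * C * (t ^ (n+1) / ((n:ℝ)+1))) * (s ^ (n+1) / ((n:ℝ)+1)) := by
              apply mul_le_mul_of_nonneg_left (int_pow_le n hα0 hαβ hβs)
              positivity
          _ = M * C * (s ^ (n+1) * t ^ (n+1)) / (((n:ℝ)+1) * ((n:ℝ)+1)) := by
              have : ((n:ℝ)+1) ≠ 0 := by positivity
              field_simp
    _ = (m : ℝ) * M * C * (s ^ (n+1) * t ^ (n+1)) / (((n:ℝ)+1) * ((n:ℝ)+1)) := by
        rw [Finset.sum_const, Finset.card_range, nsmul_eq_mul]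
        ring

end

section
variable {A : ℝ} {m : ℕ} {a b : ℕ → ℝ → ℝ} {k : ℕ → ℝ × ℝ → ℝ × ℝ → ℝ} {g : ℝ × ℝ → ℝ}

lemma bdd_of_clamp (hA : 0 ≤ A) {h : ℝ × ℝ → ℝ} (hc : Continuous h)
    (hcl : ∀ x : ℝ × ℝ, h x = h (vcl A x.1, vcl A x.2)) :
    ∃ C, ∀ x : ℝ × ℝ, ‖h x‖ ≤ C := by
  obtain ⟨C, hC⟩ := (IsCompact.prod isCompact_Icc isCompact_Icc :
    IsCompact (Icc (0:ℝ) A ×ˢ Icc (0:ℝ) A)).exists_bound_of_continuousOn hc.continuousOn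
  exact ⟨C, fun x => by
    rw [hcl x]; exact hC _ (mk_mem_prod (vcl_mem A hA _) (vcl_mem A hA _))⟩

lemma volT_iter_cont (hA : 0 ≤ A)
    (ha_cont : ∀ p, ContinuousOn (a p) (Set.Icc 0 A))
    (hb_cont : ∀ p, ContinuousOn (b p) (Set.Icc 0 A))
    (hk_cont : ∀ p, ContinuousOn (fun q : (ℝ × ℝ) × (ℝ × ℝ) => k p q.1 q.2)
      ((Set.Icc 0 A ×ˢ Set.Icc 0 A) ×ˢ (Set.Icc 0 A ×ˢ Set.Icc 0 A)))
    (hg : ContinuousOn g (Set.Icc 0 A ×ˢ Set.Icc 0 A))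
    {z : ℝ × ℝ → ℝ} (hz : Continuous z) :
    ∀ n : ℕ, Continuous ((volT A m a b k g)^[n] z) := by
  intro n
  induction n with
  | zero => simpa using hz
  | succ n ih =>
    rw [Function.iterate_succ_apply']
    exact volT_cont hA ha_cont hb_cont hk_cont hg ih

lemma volT_iter_bound (hA : 0 ≤ A) {M : ℝ} (hM0 : 0 ≤ M)
    (ha_cont : ∀ p, ContinuousOn (a p) (Set.Icc 0 A))
    (hb_cont : ∀ p, ContinuousOn (b p) (Set.Icc 0 A))
    (hk_cont : ∀ p, ContinuousOn (fun q : (ℝ × ℝ) × (ℝ × ℝ) => k p q.1 q.2)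
      ((Set.Icc 0 A ×ˢ Set.Icc 0 A) ×ˢ (Set.Icc 0 A ×ˢ Set.Icc 0 A)))
    (hg : ContinuousOn g (Set.Icc 0 A ×ˢ Set.Icc 0 A))
    (haI : ∀ p ≤ m, ∀ s ∈ Icc 0 A, a p s ∈ Icc 0 s)
    (hbI : ∀ p ≤ m, ∀ t ∈ Icc 0 A, b p t ∈ Icc 0 t)
    (ha_mono : ∀ p < m, ∀ s ∈ Icc 0 A, a p s ≤ a (p + 1) s)
    (hb_mono : ∀ p < m, ∀ t ∈ Icc 0 A, b p t ≤ b (p + 1) t)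
    (hkM : ∀ p < m, ∀ x ∈ Icc 0 A ×ˢ Icc 0 A, ∀ w ∈ Icc 0 A ×ˢ Icc 0 A, |k (p+1) x w| ≤ M)
    {z v : ℝ × ℝ → ℝ} (hz : Continuous z) (hv : Continuous v)
    {D : ℝ} (hD : 0 ≤ D) (hzv : ∀ x : ℝ × ℝ, |z x - v x| ≤ D) :
    ∀ n : ℕ, ∀ x : ℝ × ℝ,
      |(volT A m a b k g)^[n] z x - (volT A m a b k g)^[n] v x|
        ≤ (D * ((m:ℝ) * M) ^ n / ((n ! : ℝ) * (n ! : ℝ)))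
            * ((vcl A x.1) ^ n * (vcl A x.2) ^ n) := by
  intro n
  induction n with
  | zero => intro x; simpa using hzv x
  | succ n ih =>
    intro x
    have hfac : (0:ℝ) < (n ! : ℝ) := by positivity
    have hmM : (0:ℝ) ≤ (m:ℝ) * M := by positivity
    rw [Function.iterate_succ_apply', Function.iterate_succ_apply']
    have hzn := volT_iter_cont (m := m) hA ha_cont hb_cont hk_cont hg hz n
    have hvn := volT_iter_cont (m := m) hA ha_cont hb_cont hk_cont hg hv n
    have key := volT_step (g := g) hA hM0 hk_cont haI hbI ha_mono hb_mono hkM hzn hvn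
      (C := D * ((m:ℝ) * M) ^ n / ((n ! : ℝ) * (n ! : ℝ))) (by positivity) (n := n)
      (fun σ hσ τ hτ => by
        have h := ih (σ, τ)
        simpa [vcl_eq A hσ, vcl_eq A hτ] using h)
    rw [volT_clamp hA _ x, volT_clamp hA _ x]
    have hkey := key (vcl A x.1) (vcl_mem A hA _) (vcl A x.2) (vcl_mem A hA _)
    refine hkey.trans (le_of_eq ?_)
    have hne : ((n:ℝ) + 1) ≠ 0 := by positivity
    have hfne : ((n ! : ℕ) : ℝ) ≠ 0 := ne_of_gt hfac
    push_cast [Nat.factorial_succ]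
    field_simp
    ring

end

noncomputable def volTB (A : ℝ) (m : ℕ) (a b : ℕ → ℝ → ℝ)
    (k : ℕ → ℝ × ℝ → ℝ × ℝ → ℝ) (g : ℝ × ℝ → ℝ) (hA : 0 ≤ A)
    (ha_cont : ∀ p, ContinuousOn (a p) (Set.Icc 0 A))
    (hb_cont : ∀ p, ContinuousOn (b p) (Set.Icc 0 A))
    (hk_cont : ∀ p, ContinuousOn (fun q : (ℝ × ℝ) × (ℝ × ℝ) => k p q.1 q.2)
      ((Set.Icc 0 A ×ˢ Set.Icc 0 A) ×ˢ (Set.Icc 0 A ×ˢ Set.Icc 0 A)))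
    (hg : ContinuousOn g (Set.Icc 0 A ×ˢ Set.Icc 0 A))
    (z : ℝ × ℝ →ᵇ ℝ) : ℝ × ℝ →ᵇ ℝ :=
  have hc : Continuous (volT A m a b k g ⇑z) :=
    volT_cont hA ha_cont hb_cont hk_cont hg z.continuous
  have hb : ∃ C, ∀ x, ‖volT A m a b k g ⇑z x‖ ≤ C :=
    bdd_of_clamp hA hc (volT_clamp hA ⇑z)
  BoundedContinuousFunction.ofNormedAddCommGroup _ hc hb.choose hb.choose_spec

lemma volTB_coe (A : ℝ) (m : ℕ) (a b : ℕ → ℝ → ℝ)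
    (k : ℕ → ℝ × ℝ → ℝ × ℝ → ℝ) (g : ℝ × ℝ → ℝ) (hA : 0 ≤ A)
    (ha_cont : ∀ p, ContinuousOn (a p) (Set.Icc 0 A))
    (hb_cont : ∀ p, ContinuousOn (b p) (Set.Icc 0 A))
    (hk_cont : ∀ p, ContinuousOn (fun q : (ℝ × ℝ) × (ℝ × ℝ) => k p q.1 q.2)
      ((Set.Icc 0 A ×ˢ Set.Icc 0 A) ×ˢ (Set.Icc 0 A ×ˢ Set.Icc 0 A)))
    (hg : ContinuousOn g (Set.Icc 0 A ×ˢ Set.Icc 0 A))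
    (z : ℝ × ℝ →ᵇ ℝ) :
    ⇑(volTB A m a b k g hA ha_cont hb_cont hk_cont hg z) = volT A m a b k g ⇑z := rfl

noncomputable def clampExtB (A : ℝ) (hA : 0 ≤ A) (z : ℝ × ℝ → ℝ)
    (hz : ContinuousOn z (Set.Icc 0 A ×ˢ Set.Icc 0 A)) : ℝ × ℝ →ᵇ ℝ :=
  have hc : Continuous fun x : ℝ × ℝ => z (vcl A x.1, vcl A x.2) :=
    hz.comp_continuous (by fun_prop)
      (fun x => Set.mk_mem_prod (vcl_mem A hA _) (vcl_mem A hA _))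
  have hb : ∃ C, ∀ x : ℝ × ℝ, ‖z (vcl A x.1, vcl A x.2)‖ ≤ C :=
    bdd_of_clamp hA hc (fun x => by rw [vcl_idem A hA, vcl_idem A hA])
  BoundedContinuousFunction.ofNormedAddCommGroup _ hc hb.choose hb.choose_spec

lemma clampExtB_coe (A : ℝ) (hA : 0 ≤ A) (z : ℝ × ℝ → ℝ)
    (hz : ContinuousOn z (Set.Icc 0 A ×ˢ Set.Icc 0 A)) :
    ⇑(clampExtB A hA z hz) = fun x : ℝ × ℝ => z (vcl A x.1, vcl A x.2) := rfl

section
variable {A : ℝ} {m : ℕ} {a b : ℕ → ℝ → ℝ} {k : ℕ → ℝ × ℝ → ℝ × ℝ → ℝ} {g : ℝ × ℝ → ℝ}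

lemma sum_int_congr (hA : 0 ≤ A)
    (ha_maps : ∀ p, ∀ s ∈ Set.Icc 0 A, a p s ∈ Set.Icc 0 A)
    (hb_maps : ∀ p, ∀ t ∈ Set.Icc 0 A, b p t ∈ Set.Icc 0 A)
    {z w : ℝ × ℝ → ℝ}
    (hzw : ∀ σ ∈ Icc 0 A, ∀ τ ∈ Icc 0 A, z (σ, τ) = w (σ, τ))
    {s t : ℝ} (hs : s ∈ Icc 0 A) (ht : t ∈ Icc 0 A) :
    (∑ p ∈ Finset.range m, ∫ σ in a p s..a (p+1) s, ∫ τ in b p t..b (p+1) t,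
        k (p+1) (s, t) (σ, τ) * z (σ, τ))
      = ∑ p ∈ Finset.range m, ∫ σ in a p s..a (p+1) s, ∫ τ in b p t..b (p+1) t,
        k (p+1) (s, t) (σ, τ) * w (σ, τ) := by
  have hIcc : Icc (0:ℝ) A = uIcc 0 A := (uIcc_of_le hA).symm
  apply Finset.sum_congr rfl
  intro p _
  apply intervalIntegral.integral_congr
  intro σ hσ
  have hσ' : σ ∈ Icc 0 A := by
    rw [hIcc]
    exact uIcc_subset_uIcc (by rw [← hIcc]; exact ha_maps p s hs)
      (by rw [← hIcc]; exact ha_maps (p+1) s hs) hσ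
  apply intervalIntegral.integral_congr
  intro τ hτ
  have hτ' : τ ∈ Icc 0 A := by
    rw [hIcc]
    exact uIcc_subset_uIcc (by rw [← hIcc]; exact hb_maps p t ht)
      (by rw [← hIcc]; exact hb_maps (p+1) t ht) hτ
  dsimp only
  rw [hzw σ hσ' τ hτ']

end

theorem volterra_2d_linear_existence_uniqueness
    (A : ℝ) (hA : 0 < A) (m : ℕ)
    (a b : ℕ → ℝ → ℝ)
    (ha_cont : ∀ p, ContinuousOn (a p) (Set.Icc 0 A))
    (hb_cont : ∀ p, ContinuousOn (b p) (Set.Icc 0 A))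
    (ha_maps : ∀ p, ∀ s ∈ Set.Icc 0 A, a p s ∈ Set.Icc 0 A)
    (hb_maps : ∀ p, ∀ t ∈ Set.Icc 0 A, b p t ∈ Set.Icc 0 A)
    (ha0 : ∀ s ∈ Set.Icc 0 A, a 0 s = 0)
    (ham : ∀ s ∈ Set.Icc 0 A, a m s = s)
    (ha_mono : ∀ p < m, ∀ s ∈ Set.Icc 0 A, a p s ≤ a (p + 1) s)
    (hb0 : ∀ t ∈ Set.Icc 0 A, b 0 t = 0)
    (hbm : ∀ t ∈ Set.Icc 0 A, b m t = t)
    (hb_mono : ∀ p < m, ∀ t ∈ Set.Icc 0 A, b p t ≤ b (p + 1) t)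
    (k : ℕ → ℝ × ℝ → ℝ × ℝ → ℝ)
    (hk_cont : ∀ p, ContinuousOn (fun q : (ℝ × ℝ) × (ℝ × ℝ) => k p q.1 q.2)
      ((Set.Icc 0 A ×ˢ Set.Icc 0 A) ×ˢ (Set.Icc 0 A ×ˢ Set.Icc 0 A)))
    (hk_nonneg : ∀ p, ∀ x ∈ Set.Icc 0 A ×ˢ Set.Icc 0 A,
      ∀ w ∈ Set.Icc 0 A ×ˢ Set.Icc 0 A, (0:ℝ) ≤ k p x w)
    (g : ℝ × ℝ → ℝ) (hg : ContinuousOn g (Set.Icc 0 A ×ˢ Set.Icc 0 A)) :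
    (∃ z : ℝ × ℝ → ℝ, ContinuousOn z (Set.Icc 0 A ×ˢ Set.Icc 0 A) ∧
      ∀ s ∈ Set.Icc 0 A, ∀ t ∈ Set.Icc 0 A,
        z (s, t) = g (s, t) + ∑ p ∈ Finset.range m,
          ∫ σ in (a p s)..(a (p + 1) s), ∫ τ in (b p t)..(b (p + 1) t),
            k (p + 1) (s, t) (σ, τ) * z (σ, τ)) ∧
    (∀ z v : ℝ × ℝ → ℝ,
      ContinuousOn z (Set.Icc 0 A ×ˢ Set.Icc 0 A) →
      ContinuousOn v (Set.Icc 0 A ×ˢ Set.Icc 0 A) →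
      (∀ s ∈ Set.Icc 0 A, ∀ t ∈ Set.Icc 0 A,
        z (s, t) = g (s, t) + ∑ p ∈ Finset.range m,
          ∫ σ in (a p s)..(a (p + 1) s), ∫ τ in (b p t)..(b (p + 1) t),
            k (p + 1) (s, t) (σ, τ) * z (σ, τ)) →
      (∀ s ∈ Set.Icc 0 A, ∀ t ∈ Set.Icc 0 A,
        v (s, t) = g (s, t) + ∑ p ∈ Finset.range m,
          ∫ σ in (a p s)..(a (p + 1) s), ∫ τ in (b p t)..(b (p + 1) t),
            k (p + 1) (s, t) (σ, τ) * v (σ, τ)) →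
      ∀ s ∈ Set.Icc 0 A, ∀ t ∈ Set.Icc 0 A, z (s, t) = v (s, t)) := by
  have hA0 : (0:ℝ) ≤ A := hA.le
  -- uniform bound on the kernels
  have hcomp : IsCompact ((Set.Icc (0:ℝ) A ×ˢ Set.Icc (0:ℝ) A) ×ˢ
      (Set.Icc (0:ℝ) A ×ˢ Set.Icc (0:ℝ) A)) :=
    (isCompact_Icc.prod isCompact_Icc).prod (isCompact_Icc.prod isCompact_Icc)
  choose B hB using fun p => hcomp.exists_bound_of_continuousOn (hk_cont p)
  set M : ℝ := ∑ p ∈ Finset.range m, max (B (p+1)) 0 with hMdef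
  have hM0 : 0 ≤ M := Finset.sum_nonneg fun p _ => le_max_right _ _
  have hkM : ∀ p < m, ∀ x ∈ Set.Icc 0 A ×ˢ Set.Icc 0 A,
      ∀ w ∈ Set.Icc 0 A ×ˢ Set.Icc 0 A, |k (p+1) x w| ≤ M := by
    intro p hpm x hx w hw
    have h1 : |k (p+1) x w| ≤ B (p+1) := by
      have := hB (p+1) (x, w) (Set.mk_mem_prod hx hw)
      simpa [Real.norm_eq_abs] using this
    refine h1.trans ((le_max_left (B (p+1)) 0).trans ?_)
    exact Finset.single_le_sum (f := fun q => max (B (q+1)) 0)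
      (fun q _ => le_max_right _ _) (Finset.mem_range.mpr hpm)
  have haI : ∀ p ≤ m, ∀ s ∈ Set.Icc 0 A, a p s ∈ Set.Icc 0 s :=
    chain_bounds ha0 ham ha_mono
  have hbI : ∀ p ≤ m, ∀ t ∈ Set.Icc 0 A, b p t ∈ Set.Icc 0 t :=
    chain_bounds hb0 hbm hb_mono
  -- operator on bounded continuous functions
  set TB : (ℝ × ℝ →ᵇ ℝ) → (ℝ × ℝ →ᵇ ℝ) :=
    volTB A m a b k g hA0 ha_cont hb_cont hk_cont hg with hTB
  have hTBcoe : ∀ w : ℝ × ℝ →ᵇ ℝ, ⇑(TB w) = volT A m a b k g ⇑w := fun w => rfl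
  have hTBiter : ∀ (n : ℕ) (w : ℝ × ℝ →ᵇ ℝ),
      ⇑(TB^[n] w) = (volT A m a b k g)^[n] ⇑w := by
    intro n
    induction n with
    | zero => intro w; rfl
    | succ n ih =>
      intro w
      rw [Function.iterate_succ_apply, Function.iterate_succ_apply, ih (TB w), hTBcoe]
  -- choose n so that the iterate is contracting
  have htend : Filter.Tendsto (fun n : ℕ => ((m:ℝ) * M * (A * A)) ^ n / (n ! : ℝ))
      Filter.atTop (nhds 0) := FloorSemiring.tendsto_pow_div_factorial_atTop _
  obtain ⟨n, hn⟩ := (htend.eventually_lt_const one_pos).exists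
  set q : ℝ := ((m:ℝ) * M * (A * A)) ^ n / (n ! : ℝ) with hqdef
  have hq0 : 0 ≤ q := by positivity
  have hdist : ∀ w u : ℝ × ℝ →ᵇ ℝ, dist (TB^[n] w) (TB^[n] u) ≤ q * dist w u := by
    intro w u
    rw [BoundedContinuousFunction.dist_le (mul_nonneg hq0 dist_nonneg)]
    intro x
    rw [hTBiter n w, hTBiter n u, Real.dist_eq]
    have hb := volT_iter_bound hA0 hM0 ha_cont hb_cont hk_cont hg haI hbI
      ha_mono hb_mono hkM w.continuous u.continuous (D := dist w u) dist_nonneg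
      (fun y => by
        rw [← Real.dist_eq]
        exact BoundedContinuousFunction.dist_coe_le_dist y) n x
    refine hb.trans ?_
    have hfac1 : (1:ℝ) ≤ (n ! : ℝ) := by exact_mod_cast Nat.one_le_iff_ne_zero.mpr n.factorial_ne_zero
    have hfacpos : (0:ℝ) < (n ! : ℝ) := lt_of_lt_of_le one_pos hfac1
    have hcl1 : (vcl A x.1) ^ n ≤ A ^ n :=
      pow_le_pow_left₀ (vcl_mem A hA0 x.1).1 (vcl_mem A hA0 x.1).2 n
    have hcl2 : (vcl A x.2) ^ n ≤ A ^ n :=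
      pow_le_pow_left₀ (vcl_mem A hA0 x.2).1 (vcl_mem A hA0 x.2).2 n
    calc dist w u * ((m:ℝ) * M) ^ n / ((n ! : ℝ) * (n ! : ℝ))
          * ((vcl A x.1) ^ n * (vcl A x.2) ^ n)
        ≤ dist w u * ((m:ℝ) * M) ^ n / ((n ! : ℝ) * (n ! : ℝ)) * (A ^ n * A ^ n) := by
          apply mul_le_mul_of_nonneg_left
          · exact mul_le_mul hcl1 hcl2 (pow_nonneg (vcl_mem A hA0 x.2).1 n) (pow_nonneg hA0 n)
          · positivity
      _ = (((m:ℝ) * M * (A * A)) ^ n / ((n ! : ℝ) * (n ! : ℝ))) * dist w u := by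
          rw [mul_pow, mul_pow]; ring
      _ ≤ (((m:ℝ) * M * (A * A)) ^ n / (n ! : ℝ)) * dist w u := by
          apply mul_le_mul_of_nonneg_right _ dist_nonneg
          apply div_le_div_of_nonneg_left (by positivity) hfacpos
          nlinarith
      _ = q * dist w u := rfl
  have hcon : ContractingWith ⟨q, hq0⟩ (TB^[n]) := by
    constructor
    · exact_mod_cast hn
    · exact LipschitzWith.of_dist_le_mul hdist
  set Z : ℝ × ℝ →ᵇ ℝ := hcon.fixedPoint (TB^[n]) with hZdef
  have hZfix : Function.IsFixedPt TB Z := hcon.isFixedPt_fixedPoint_iterate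
  constructor
  · -- existence
    refine ⟨⇑Z, Z.continuous.continuousOn, ?_⟩
    intro s hs t ht
    have h1 : (TB Z) (s, t) = Z (s, t) := by rw [hZfix]
    rw [← h1, hTBcoe]
    exact volT_eq_on hA0 ha_maps hb_maps hs ht
  · -- uniqueness
    intro z v hzc hvc hzeq hveq s hs t ht
    have hfix : ∀ (w : ℝ × ℝ → ℝ) (hwc : ContinuousOn w (Set.Icc 0 A ×ˢ Set.Icc 0 A)),
        (∀ s ∈ Set.Icc 0 A, ∀ t ∈ Set.Icc 0 A,
          w (s, t) = g (s, t) + ∑ p ∈ Finset.range m,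
            ∫ σ in (a p s)..(a (p + 1) s), ∫ τ in (b p t)..(b (p + 1) t),
              k (p + 1) (s, t) (σ, τ) * w (σ, τ)) →
        Function.IsFixedPt TB (clampExtB A hA0 w hwc) := by
      intro w hwc hweq
      apply BoundedContinuousFunction.ext
      intro x
      have hx1 := vcl_mem A hA0 x.1
      have hx2 := vcl_mem A hA0 x.2
      show volT A m a b k g (⇑(clampExtB A hA0 w hwc)) x = w (vcl A x.1, vcl A x.2)
      rw [volT_clamp hA0 _ x, volT_eq_on hA0 ha_maps hb_maps hx1 hx2,
        sum_int_congr hA0 ha_maps hb_maps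
          (z := ⇑(clampExtB A hA0 w hwc)) (w := w)
          (fun σ hσ τ hτ => by
            show w (vcl A σ, vcl A τ) = w (σ, τ)
            rw [vcl_eq A hσ, vcl_eq A hτ]) hx1 hx2]
      exact (hweq _ hx1 _ hx2).symm
    have hfz := hfix z hzc hzeq
    have hfv := hfix v hvc hveq
    have heq : clampExtB A hA0 z hzc = clampExtB A hA0 v hvc :=
      hcon.fixedPoint_unique' (hfz.iterate n) (hfv.iterate n)
    have h2 : z (vcl A s, vcl A t) = v (vcl A s, vcl A t) := by
      have := congrArg (fun f : ℝ × ℝ →ᵇ ℝ => f (s, t)) heq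
      simpa [clampExtB_coe] using this
    rwa [vcl_eq A hs, vcl_eq A ht] at h2
end

section
/- Fixed point of the uniform limit: if continuous functions z_n : Ω → ℝ converge uniformly to z on the compact rectangle Ω = [0,A] × [0,A], φ : ℝ → ℝ is Lipschitz, and z_{n+1}(s,t) = g(s,t) + Σ_{p=1}^{m} ∫_{a_{p-1}(s)}^{a_p(s)} ∫_{b_{p-1}(t)}^{b_p(t)} k_p(s,t,σ,τ) φ(z_n(σ,τ)) dτ dσ for all n, then z is continuous and satisfies z(s,t) = g(s,t) + Σ_{p=1}^{m} ∫_{a_{p-1}(s)}^{a_p(s)} ∫_{b_{p-1}(t)}^{b_p(t)} k_p(s,t,σ,τ) φ(z(σ,τ)) dτ dσ. -/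
/-!
The limit is continuous by the uniform limit theorem. For the integral equation, fix `(s, t)`
and let `n → ∞` in the recursion: since `φ` is Lipschitz and the kernels are bounded, the
integrands `k_p (s, t) · φ ∘ z_n` converge uniformly on `Ω`, and uniform convergence of continuous
functions on a rectangle passes under the iterated interval integral (first uniformly in the
outer variable for the inner integral, then for the outer one).
-/

open Filter Set Topology MeasureTheory intervalIntegral

section

variable {ι X E : Type*} [NormedAddCommGroup E] {a b : ℝ}

theorem ContinuousOn.intervalIntegrable_prodMk [TopologicalSpace X] {F : X × ℝ → E} {s : Set X}
    (hF : ContinuousOn F (s ×ˢ uIcc a b)) {x : X} (hx : x ∈ s) :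
    IntervalIntegrable (fun t => F (x, t)) volume a b :=
  ContinuousOn.intervalIntegrable <| hF.comp (by fun_prop) fun _ ht => ⟨hx, ht⟩

variable [NormedSpace ℝ E]

theorem dist_intervalIntegral_le_of_forall_dist_le {f g : ℝ → E} {C : ℝ}
    (hf : IntervalIntegrable f volume a b) (hg : IntervalIntegrable g volume a b)
    (h : ∀ t ∈ uIoc a b, dist (f t) (g t) ≤ C) :
    dist (∫ t in a..b, f t) (∫ t in a..b, g t) ≤ |b - a| * C := by
  rw [dist_eq_norm, ← integral_sub hf hg, mul_comm]
  exact norm_integral_le_of_norm_le_const fun t ht => by simpa only [dist_eq_norm] using h t ht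

theorem ContinuousOn.intervalIntegral_prod [TopologicalSpace X] {F : X × ℝ → E} {s : Set X}
    (hF : ContinuousOn F (s ×ˢ uIcc a b)) :
    ContinuousOn (fun x => ∫ t in a..b, F (x, t)) s := by
  intro q hq
  rw [ContinuousWithinAt, Metric.tendsto_nhds]
  intro ε hε
  obtain ⟨δ, hδ, hδε⟩ := exists_pos_mul_lt hε |b - a|
  -- `F` is uniformly continuous along the compact fibre `{q} × [[a, b]]`
  obtain ⟨v, hv, hvδ⟩ := isCompact_uIcc.mem_uniformity_of_prod (f := fun x t => F (x, t))
    hF hq (Metric.dist_mem_uniformity hδ)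
  filter_upwards [hv, self_mem_nhdsWithin] with x hxv hxs
  exact (dist_intervalIntegral_le_of_forall_dist_le (hF.intervalIntegrable_prodMk hxs)
    (hF.intervalIntegrable_prodMk hq) fun t ht => (hvδ x hxv t (uIoc_subset_uIcc ht)).le).trans_lt
    hδε

theorem TendstoUniformlyOn.intervalIntegral_prod {l : Filter ι} {F : ι → X × ℝ → E}
    {f : X × ℝ → E} {s : Set X} (h : TendstoUniformlyOn F f l (s ×ˢ uIcc a b))
    (hF : ∀ i, ∀ x ∈ s, IntervalIntegrable (fun t => F i (x, t)) volume a b)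
    (hf : ∀ x ∈ s, IntervalIntegrable (fun t => f (x, t)) volume a b) :
    TendstoUniformlyOn (fun i x => ∫ t in a..b, F i (x, t)) (fun x => ∫ t in a..b, f (x, t))
      l s := by
  rw [Metric.tendstoUniformlyOn_iff] at h ⊢
  intro ε hε
  obtain ⟨δ, hδ, hδε⟩ := exists_pos_mul_lt hε |b - a|
  filter_upwards [h δ hδ] with i hi x hx
  exact (dist_intervalIntegral_le_of_forall_dist_le (hf x hx) (hF i x hx)
    fun t ht => (hi (x, t) ⟨hx, uIoc_subset_uIcc ht⟩).le).trans_lt hδε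

theorem TendstoUniformlyOn.tendsto_intervalIntegral_intervalIntegral {l : Filter ι}
    [l.IsCountablyGenerated] {F : ι → ℝ × ℝ → E} {f : ℝ × ℝ → E} {a₀ a₁ b₀ b₁ : ℝ}
    (h : TendstoUniformlyOn F f l (uIcc a₀ a₁ ×ˢ uIcc b₀ b₁))
    (hF : ∀ i, ContinuousOn (F i) (uIcc a₀ a₁ ×ˢ uIcc b₀ b₁))
    (hf : ContinuousOn f (uIcc a₀ a₁ ×ˢ uIcc b₀ b₁)) :
    Tendsto (fun i => ∫ σ in a₀..a₁, ∫ τ in b₀..b₁, F i (σ, τ)) l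
      (𝓝 (∫ σ in a₀..a₁, ∫ τ in b₀..b₁, f (σ, τ))) :=
  (h.intervalIntegral_prod (fun i _ => (hF i).intervalIntegrable_prodMk)
    fun _ => hf.intervalIntegrable_prodMk).tendsto_intervalIntegral_of_continuousOn
    (Eventually.of_forall fun i => (hF i).intervalIntegral_prod)

end

theorem TendstoUniformlyOn.mul_left_of_norm_le {ι α R : Type*} [SeminormedRing R]
    {l : Filter ι} {f : ι → α → R} {g : α → R} {s : Set α} {c : α → R} {C : ℝ}
    (h : TendstoUniformlyOn f g l s) (hc : ∀ x ∈ s, ‖c x‖ ≤ C) :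
    TendstoUniformlyOn (fun i x => c x * f i x) (fun x => c x * g x) l s := by
  rw [Metric.tendstoUniformlyOn_iff] at h ⊢
  intro ε hε
  obtain ⟨δ, hδ, hδε⟩ := exists_pos_mul_lt hε C
  filter_upwards [h δ hδ] with i hi x hx
  calc dist (c x * g x) (c x * f i x) ≤ ‖c x‖ * dist (g x) (f i x) := by
        simpa only [dist_eq_norm, ← mul_sub] using norm_mul_le _ _
    _ ≤ C * δ := mul_le_mul (hc x hx) (hi x hx).le dist_nonneg ((norm_nonneg _).trans (hc x hx))
    _ < ε := hδε

theorem fixed_point_of_uniform_limit_general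
    (A : ℝ) (m : ℕ)
    (a b : ℕ → ℝ → ℝ)
    (ha_maps : ∀ p, ∀ s ∈ Set.Icc 0 A, a p s ∈ Set.Icc 0 A)
    (hb_maps : ∀ p, ∀ t ∈ Set.Icc 0 A, b p t ∈ Set.Icc 0 A)
    (k : ℕ → ℝ × ℝ → ℝ × ℝ → ℝ)
    (hk_cont : ∀ p, ContinuousOn (fun q : (ℝ × ℝ) × (ℝ × ℝ) => k p q.1 q.2)
      ((Set.Icc 0 A ×ˢ Set.Icc 0 A) ×ˢ (Set.Icc 0 A ×ˢ Set.Icc 0 A)))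
    (K : ℝ) (hk_bdd : ∀ p, ∀ x ∈ Set.Icc 0 A ×ˢ Set.Icc 0 A,
      ∀ w ∈ Set.Icc 0 A ×ˢ Set.Icc 0 A, |k p x w| ≤ K)
    (g : ℝ × ℝ → ℝ)
    (φ : ℝ → ℝ) (L : ℝ)
    (hφ : ∀ x y : ℝ, |φ x - φ y| ≤ L * |x - y|)
    (z : ℕ → ℝ × ℝ → ℝ) (zlim : ℝ × ℝ → ℝ)
    (hz_cont : ∀ n, ContinuousOn (z n) (Set.Icc 0 A ×ˢ Set.Icc 0 A))
    (hz_unif : TendstoUniformlyOn z zlim Filter.atTop (Set.Icc 0 A ×ˢ Set.Icc 0 A))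
    (hz_rec : ∀ n, ∀ s ∈ Set.Icc 0 A, ∀ t ∈ Set.Icc 0 A,
      z (n + 1) (s, t) = g (s, t) + ∑ p ∈ Finset.range m,
        ∫ σ in (a p s)..(a (p + 1) s), ∫ τ in (b p t)..(b (p + 1) t),
          k (p + 1) (s, t) (σ, τ) * φ (z n (σ, τ))) :
    ContinuousOn zlim (Set.Icc 0 A ×ˢ Set.Icc 0 A) ∧
    ∀ s ∈ Set.Icc 0 A, ∀ t ∈ Set.Icc 0 A,
      zlim (s, t) = g (s, t) + ∑ p ∈ Finset.range m,
        ∫ σ in (a p s)..(a (p + 1) s), ∫ τ in (b p t)..(b (p + 1) t),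
          k (p + 1) (s, t) (σ, τ) * φ (zlim (σ, τ)) := by
  set Ω := Set.Icc 0 A ×ˢ Set.Icc 0 A
  have hzlim_cont : ContinuousOn zlim Ω :=
    hz_unif.continuousOn (Eventually.of_forall hz_cont).frequently
  refine ⟨hzlim_cont, fun s hs t ht => ?_⟩
  have hφ_unif : UniformContinuous φ :=
    (LipschitzWith.of_dist_le' (K := L) (by simpa only [Real.dist_eq] using hφ)).uniformContinuous
  have hk_slice : ∀ p, ContinuousOn (k p (s, t)) Ω := fun p =>
    (hk_cont p).comp (continuous_const.prodMk continuous_id).continuousOn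
      fun _ hw => ⟨⟨hs, ht⟩, hw⟩
  have hterm : ∀ p, Tendsto
      (fun n => ∫ σ in (a p s)..(a (p + 1) s), ∫ τ in (b p t)..(b (p + 1) t),
        k (p + 1) (s, t) (σ, τ) * φ (z n (σ, τ))) atTop
      (𝓝 (∫ σ in (a p s)..(a (p + 1) s), ∫ τ in (b p t)..(b (p + 1) t),
        k (p + 1) (s, t) (σ, τ) * φ (zlim (σ, τ)))) := by
    intro p
    have hR : uIcc (a p s) (a (p + 1) s) ×ˢ uIcc (b p t) (b (p + 1) t) ⊆ Ω :=
      prod_mono (uIcc_subset_Icc (ha_maps p s hs) (ha_maps (p + 1) s hs))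
        (uIcc_subset_Icc (hb_maps p t ht) (hb_maps (p + 1) t ht))
    have hunif := (hφ_unif.comp_tendstoUniformlyOn hz_unif).mul_left_of_norm_le
      (hk_bdd (p + 1) (s, t) ⟨hs, ht⟩)
    refine (hunif.mono hR).tendsto_intervalIntegral_intervalIntegral (fun n => ?_) ?_
    · exact ((hk_slice _).mul (hφ_unif.continuous.comp_continuousOn (hz_cont n))).mono hR
    · exact ((hk_slice _).mul (hφ_unif.continuous.comp_continuousOn hzlim_cont)).mono hR
  refine tendsto_nhds_unique ?_ ((tendsto_finsetSum _ fun p _ => hterm p).const_add (g (s, t)))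
  exact ((hz_unif.tendsto_at ⟨hs, ht⟩).comp (tendsto_add_atTop_nat 1)).congr
    fun n => hz_rec n s hs t ht

theorem fixed_point_of_uniform_limit
    (A : ℝ) (hA : 0 < A) (m : ℕ)
    (a b : ℕ → ℝ → ℝ)
    (ha_cont : ∀ p, ContinuousOn (a p) (Set.Icc 0 A))
    (hb_cont : ∀ p, ContinuousOn (b p) (Set.Icc 0 A))
    (ha_maps : ∀ p, ∀ s ∈ Set.Icc 0 A, a p s ∈ Set.Icc 0 A)
    (hb_maps : ∀ p, ∀ t ∈ Set.Icc 0 A, b p t ∈ Set.Icc 0 A)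
    (ha0 : ∀ s ∈ Set.Icc 0 A, a 0 s = 0)
    (ham : ∀ s ∈ Set.Icc 0 A, a m s = s)
    (ha_mono : ∀ p < m, ∀ s ∈ Set.Icc 0 A, a p s ≤ a (p + 1) s)
    (hb0 : ∀ t ∈ Set.Icc 0 A, b 0 t = 0)
    (hbm : ∀ t ∈ Set.Icc 0 A, b m t = t)
    (hb_mono : ∀ p < m, ∀ t ∈ Set.Icc 0 A, b p t ≤ b (p + 1) t)
    (k : ℕ → ℝ × ℝ → ℝ × ℝ → ℝ)
    (hk_cont : ∀ p, ContinuousOn (fun q : (ℝ × ℝ) × (ℝ × ℝ) => k p q.1 q.2)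
      ((Set.Icc 0 A ×ˢ Set.Icc 0 A) ×ˢ (Set.Icc 0 A ×ˢ Set.Icc 0 A)))
    (K : ℝ) (hk_bdd : ∀ p, ∀ x ∈ Set.Icc 0 A ×ˢ Set.Icc 0 A,
      ∀ w ∈ Set.Icc 0 A ×ˢ Set.Icc 0 A, |k p x w| ≤ K)
    (g : ℝ × ℝ → ℝ) (hg : ContinuousOn g (Set.Icc 0 A ×ˢ Set.Icc 0 A))
    (φ : ℝ → ℝ) (L : ℝ) (hL : 0 < L)
    (hφ : ∀ x y : ℝ, |φ x - φ y| ≤ L * |x - y|)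
    (z : ℕ → ℝ × ℝ → ℝ) (zlim : ℝ × ℝ → ℝ)
    (hz_cont : ∀ n, ContinuousOn (z n) (Set.Icc 0 A ×ˢ Set.Icc 0 A))
    (hz_unif : TendstoUniformlyOn z zlim Filter.atTop (Set.Icc 0 A ×ˢ Set.Icc 0 A))
    (hz_rec : ∀ n, ∀ s ∈ Set.Icc 0 A, ∀ t ∈ Set.Icc 0 A,
      z (n + 1) (s, t) = g (s, t) + ∑ p ∈ Finset.range m,
        ∫ σ in (a p s)..(a (p + 1) s), ∫ τ in (b p t)..(b (p + 1) t),
          k (p + 1) (s, t) (σ, τ) * φ (z n (σ, τ))) :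
    ContinuousOn zlim (Set.Icc 0 A ×ˢ Set.Icc 0 A) ∧
    ∀ s ∈ Set.Icc 0 A, ∀ t ∈ Set.Icc 0 A,
      zlim (s, t) = g (s, t) + ∑ p ∈ Finset.range m,
        ∫ σ in (a p s)..(a (p + 1) s), ∫ τ in (b p t)..(b (p + 1) t),
          k (p + 1) (s, t) (σ, τ) * φ (zlim (σ, τ)) :=
  fixed_point_of_uniform_limit_general A m a b ha_maps hb_maps k hk_cont K hk_bdd g φ L hφ z zlim
    hz_cont hz_unif hz_rec
end
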